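/- arXiv:2410.17611 — 7 statements merged into one kernel-verified Lean document; each statement's English description precedes it below -/
import Mathlib

section
/- If S is a dual general position set of a graph G, then the central vertex of any induced K_{1,3} (claw) in G does not belong to S. -/
open SimpleGraph

/-- Two vertices `u` and `v` are `S`-visible: there exists a shortest `u,v`-path
whose intersection with `S` is contained in `{u, v}`. -/
def isVisible {V : Type*} (G : SimpleGraph V) (S : Set V) (u v : V) : Prop :=
  ∃ p : G.Walk u v, p.IsPath ∧ p.length = G.dist u v ∧
    ∀ w ∈ p.support, w ∈ S → w = u ∨ w = v

/-- Two vertices `u` and `v` are `S`-positionable: every shortest `u,v`-path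
has its intersection with `S` contained in `{u, v}`. -/
def isPositionable {V : Type*} (G : SimpleGraph V) (S : Set V) (u v : V) : Prop :=
  ∀ p : G.Walk u v, p.IsPath → p.length = G.dist u v →
    ∀ w ∈ p.support, w ∈ S → w = u ∨ w = v

def isMVSet {V : Type*} (G : SimpleGraph V) (S : Set V) : Prop :=
  ∀ u ∈ S, ∀ v ∈ S, isVisible G S u v

def isOuterMVSet {V : Type*} (G : SimpleGraph V) (S : Set V) : Prop :=
  isMVSet G S ∧ ∀ u ∈ S, ∀ v ∉ S, isVisible G S u v

def isDualMVSet {V : Type*} (G : SimpleGraph V) (S : Set V) : Prop :=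
  isMVSet G S ∧ ∀ u ∉ S, ∀ v ∉ S, isVisible G S u v

def isTotalMVSet {V : Type*} (G : SimpleGraph V) (S : Set V) : Prop :=
  ∀ u v : V, isVisible G S u v

def isGPSet {V : Type*} (G : SimpleGraph V) (S : Set V) : Prop :=
  ∀ u ∈ S, ∀ v ∈ S, isPositionable G S u v

def isOuterGPSet {V : Type*} (G : SimpleGraph V) (S : Set V) : Prop :=
  isGPSet G S ∧ ∀ u ∈ S, ∀ v ∉ S, isPositionable G S u v

def isDualGPSet {V : Type*} (G : SimpleGraph V) (S : Set V) : Prop :=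
  isGPSet G S ∧ ∀ u ∉ S, ∀ v ∉ S, isPositionable G S u v

def isTotalGPSet {V : Type*} (G : SimpleGraph V) (S : Set V) : Prop :=
  ∀ u v : V, isPositionable G S u v

/-- Vertices of the generalized glued `t`-ary tree obtained from `n` copies of
the perfect `t`-ary tree of depth `r`: an internal vertex of copy `i` is encoded
as the list of child-choices from the root (length `< r`), and a quasi-leaf
(identified leaf) is encoded as such a list of length exactly `r`. -/
abbrev gluedVert (r n t : ℕ) : Type :=
  (Fin n × {l : List (Fin t) // l.length < r}) ⊕ {l : List (Fin t) // l.length = r}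

def gluedAdj (r n t : ℕ) : gluedVert r n t → gluedVert r n t → Prop
  | Sum.inl (i, s), Sum.inl (j, s') => i = j ∧ ∃ b, s'.val = s.val ++ [b]
  | Sum.inl (_, s), Sum.inr l => ∃ b, l.val = s.val ++ [b]
  | Sum.inr _, _ => False

/-- The generalized glued `t`-ary tree on `n` copies of the perfect `t`-ary tree
of depth `r`.  `gluedTree r 2 2` is the glued binary tree `GT(r)`,
`gluedTree r 2 t` is the glued `t`-ary tree `GT(r,t)`, and `gluedTree r n 2`
is the generalized glued binary tree `GT_r^(n)`. -/
def gluedTree (r n t : ℕ) : SimpleGraph (gluedVert r n t) :=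
  SimpleGraph.fromRel (gluedAdj r n t)

/-- The set of quasi-leaves. -/
def quasiLeaves (r n t : ℕ) : Set (gluedVert r n t) := {x | ∃ l, x = Sum.inr l}

/-- The vertex set of the `i`-th copy `T_r^(i)` of the perfect `t`-ary tree
(its internal vertices together with all quasi-leaves). -/
def copySet (r n t : ℕ) (i : Fin n) : Set (gluedVert r n t) :=
  {x | (∃ s, x = Sum.inl (i, s)) ∨ x ∈ quasiLeaves r n t}

lemma center_lemma {V : Type*} (G : SimpleGraph V) (S : Set V)
    (c u v : V) (hc : c ∈ S)
    (hu : G.Adj c u) (hv : G.Adj c v) (huv : u ≠ v) (hnadj : ¬ G.Adj u v)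
    (hpos : isPositionable G S u v) : False := by
  have hcu : c ≠ u := G.ne_of_adj hu
  have hcv : c ≠ v := G.ne_of_adj hv
  set p : G.Walk u v := Walk.cons hu.symm (Walk.cons hv Walk.nil) with hp
  have hpath : p.IsPath := by
    rw [hp]
    simp [Walk.isPath_def, List.Nodup]
    exact ⟨⟨Ne.symm hcu, huv⟩, hcv⟩
  have hlen : p.length = 2 := rfl
  have hreach : G.Reachable u v := ⟨p⟩
  have hd2 : G.dist u v ≤ 2 := by
    have := SimpleGraph.dist_le p
    omega
  have hd0 : G.dist u v ≠ 0 := by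
    intro h
    exact huv (hreach.dist_eq_zero_iff.mp h)
  have hd1 : G.dist u v ≠ 1 := by
    intro h
    exact hnadj (SimpleGraph.dist_eq_one_iff_adj.mp h)
  have hdist : p.length = G.dist u v := by omega
  have hcsup : c ∈ p.support := by simp [hp]
  rcases hpos p hpath hdist c hcsup hc with h | h
  · exact hcu h
  · exact hcv h

theorem stmt0 {V : Type*} (G : SimpleGraph V) (S : Set V) (hS : isDualGPSet G S)
    (c v1 v2 v3 : V)
    (h1 : G.Adj c v1) (h2 : G.Adj c v2) (h3 : G.Adj c v3)
    (h12 : v1 ≠ v2) (h13 : v1 ≠ v3) (h23 : v2 ≠ v3)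
    (n12 : ¬ G.Adj v1 v2) (n13 : ¬ G.Adj v1 v3) (n23 : ¬ G.Adj v2 v3) :
    c ∉ S := by
  intro hc
  have keyS : ∀ u v, G.Adj c u → G.Adj c v → u ≠ v → ¬ G.Adj u v →
      u ∈ S → v ∈ S → False := fun u v hu hv huv hn huS hvS =>
    center_lemma G S c u v hc hu hv huv hn (hS.1 u huS v hvS)
  have keyN : ∀ u v, G.Adj c u → G.Adj c v → u ≠ v → ¬ G.Adj u v →
      u ∉ S → v ∉ S → False := fun u v hu hv huv hn huS hvS =>
    center_lemma G S c u v hc hu hv huv hn (hS.2 u huS v hvS)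
  by_cases h1S : v1 ∈ S <;> by_cases h2S : v2 ∈ S
  · exact keyS v1 v2 h1 h2 h12 n12 h1S h2S
  · by_cases h3S : v3 ∈ S
    · exact keyS v1 v3 h1 h3 h13 n13 h1S h3S
    · exact keyN v2 v3 h2 h3 h23 n23 h2S h3S
  · by_cases h3S : v3 ∈ S
    · exact keyS v2 v3 h2 h3 h23 n23 h2S h3S
    · exact keyN v1 v3 h1 h3 h13 n13 h1S h3S
  · exact keyN v1 v2 h1 h2 h12 n12 h1S h2S
end

section
/- If G is a triangle-free graph with minimum degree at least 3, then the dual general position number of G is 0, i.e., the only dual general position set of G is the empty set. -/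
open SimpleGraph

/-! In a triangle-free graph, a common neighbour `x` of two distinct vertices `u`, `v` lies on
the shortest path `u x v`, so `x ∈ S` prevents `u`, `v` from being `S`-positionable. A vertex
`x ∈ S` has at least three neighbours, and two of them lie on the same side of `S`; a dual
general position set must make that pair `S`-positionable. -/

namespace SimpleGraph

variable {V : Type*} {G : SimpleGraph V} {u v x : V}

lemma dist_eq_two_of_adj_of_adj (hux : G.Adj u x) (hxv : G.Adj x v) (huv : u ≠ v)
    (hnadj : ¬ G.Adj u v) : G.dist u v = 2 := by
  rw [dist, ENat.toNat_eq_iff two_ne_zero, Nat.cast_ofNat, edist_eq_two_iff]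
  exact ⟨huv, hnadj, x, hux, hxv.symm⟩

lemma CliqueFree.not_adj_of_adj_of_adj (htf : G.CliqueFree 3) (hux : G.Adj u x)
    (hxv : G.Adj x v) : ¬ G.Adj u v := by
  classical
  exact fun huv => htf {x, u, v} (is3Clique_triple_iff.2 ⟨hux.symm, hxv, huv⟩)

lemma CliqueFree.not_isPositionable_of_adj_of_adj (htf : G.CliqueFree 3) {S : Set V}
    (hux : G.Adj u x) (hxv : G.Adj x v) (huv : u ≠ v) (hx : x ∈ S) :
    ¬ isPositionable G S u v := by
  intro hpos
  let p : G.Walk u v := .cons hux (.cons hxv .nil)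
  have hpath : p.IsPath := by simp [p, hux.ne, huv, hxv.ne]
  have hshortest : p.length = G.dist u v :=
    (dist_eq_two_of_adj_of_adj hux hxv huv (htf.not_adj_of_adj_of_adj hux hxv)).symm
  rcases hpos p hpath hshortest x (by simp [p]) hx with rfl | rfl
  · exact hux.ne rfl
  · exact hxv.ne rfl

end SimpleGraph

lemma Set.exists_ne_mem_iff_mem_of_two_lt_ncard {α : Type*} {N : Set α} (hN : 2 < N.ncard)
    (S : Set α) : ∃ u ∈ N, ∃ v ∈ N, u ≠ v ∧ (u ∈ S ↔ v ∈ S) := by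
  obtain ⟨a, b, c, ha, hb, hc, hab, hac, hbc⟩ :=
    (Set.two_lt_ncard_iff (Set.finite_of_ncard_pos (by omega))).1 hN
  by_cases hab' : a ∈ S ↔ b ∈ S
  · exact ⟨a, ha, b, hb, hab, hab'⟩
  by_cases hac' : a ∈ S ↔ c ∈ S
  · exact ⟨a, ha, c, hc, hac, hac'⟩
  exact ⟨b, hb, c, hc, hbc, by tauto⟩

theorem stmt1 {V : Type*} (G : SimpleGraph V) (htf : G.CliqueFree 3)
    (hdeg : ∀ v : V, 3 ≤ (G.neighborSet v).ncard) :
    ∀ S : Set V, isDualGPSet G S → S = ∅ := by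
  intro S hS
  refine Set.eq_empty_of_forall_notMem fun x hx => ?_
  obtain ⟨u, hu, v, hv, huv, hsame⟩ := Set.exists_ne_mem_iff_mem_of_two_lt_ncard (hdeg x) S
  have hpos : isPositionable G S u v := by
    by_cases huS : u ∈ S
    · exact hS.1 u huS v (hsame.1 huS)
    · exact hS.2 u huS v (mt hsame.2 huS)
  exact htf.not_isPositionable_of_adj_of_adj (G.adj_symm hu) hv huv hx hpos
end

section
/- For r ≥ 2, each subgraph of the glued binary tree GT(r) induced by one of the two perfect binary trees T_r^(i) (i = 1,2) is an isometric subgraph of GT(r). -/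
open SimpleGraph

def proj (r n t : ℕ) (i : Fin n) : gluedVert r n t → gluedVert r n t
  | Sum.inl (_, s) => Sum.inl (i, s)
  | Sum.inr l => Sum.inr l

lemma proj_mem (r n t : ℕ) (i : Fin n) (x : gluedVert r n t) :
    proj r n t i x ∈ copySet r n t i := by
  cases x with
  | inl p => exact Or.inl ⟨p.2, rfl⟩
  | inr l => exact Or.inr ⟨l, rfl⟩

lemma proj_fix (r n t : ℕ) (i : Fin n) (x : gluedVert r n t)
    (hx : x ∈ copySet r n t i) : proj r n t i x = x := by
  rcases hx with ⟨s, rfl⟩ | ⟨l, rfl⟩ <;> rfl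

lemma gluedAdj_proj {r n t : ℕ} (i : Fin n) {x y : gluedVert r n t}
    (h : gluedAdj r n t x y) : gluedAdj r n t (proj r n t i x) (proj r n t i y) := by
  match x, y, h with
  | Sum.inl (j, s), Sum.inl (j', s'), ⟨hj, b, hb⟩ => exact ⟨rfl, b, hb⟩
  | Sum.inl (j, s), Sum.inr l, hb => exact hb

lemma gluedAdj_proj_ne {r n t : ℕ} (i : Fin n) {x y : gluedVert r n t}
    (h : gluedAdj r n t x y) : proj r n t i x ≠ proj r n t i y := by
  match x, y, h with
  | Sum.inl (j, s), Sum.inl (j', s'), ⟨hj, b, hb⟩ =>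
    intro hc
    have : s = s' := by simpa [proj] using hc
    subst this
    simp at hb
  | Sum.inl (j, s), Sum.inr l, hb => simp [proj]

def projHom (r n t : ℕ) (i : Fin n) :
    gluedTree r n t →g (gluedTree r n t).induce (copySet r n t i) where
  toFun x := ⟨proj r n t i x, proj_mem r n t i x⟩
  map_rel' := by
    rintro x y ⟨hne, h | h⟩
    · exact ⟨gluedAdj_proj_ne i h, Or.inl (gluedAdj_proj i h)⟩
    · exact ⟨(gluedAdj_proj_ne i h).symm, Or.inr (gluedAdj_proj i h)⟩

theorem stmt2 (r : ℕ) (hr : 2 ≤ r) (i : Fin 2) (u v : copySet r 2 2 i) :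
    ((gluedTree r 2 2).induce (copySet r 2 2 i)).dist u v
      = (gluedTree r 2 2).dist u.1 v.1 := by
  set G := gluedTree r 2 2
  set H := G.induce (copySet r 2 2 i) with hH
  have hψu : (projHom r 2 2 i) u.1 = u := Subtype.ext (proj_fix r 2 2 i u.1 u.2)
  have hψv : (projHom r 2 2 i) v.1 = v := Subtype.ext (proj_fix r 2 2 i v.1 v.2)
  by_cases h : G.Reachable u.1 v.1
  · have h1 : H.dist u v ≤ G.dist u.1 v.1 := by
      obtain ⟨p, hp⟩ := h.exists_walk_length_eq_dist
      have := SimpleGraph.dist_le (p.map (projHom r 2 2 i))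
      rw [Walk.length_map, hp, hψu, hψv] at this
      exact this
    have hHr : H.Reachable u v := by
      have := h.map (projHom r 2 2 i)
      rwa [hψu, hψv] at this
    have h2 : G.dist u.1 v.1 ≤ H.dist u v := by
      obtain ⟨q, hq⟩ := hHr.exists_walk_length_eq_dist
      have := SimpleGraph.dist_le (q.map (SimpleGraph.Embedding.induce (copySet r 2 2 i)).toHom)
      rw [Walk.length_map, hq] at this
      exact this
    omega
  · have hHr : ¬ H.Reachable u v := fun hc => by
      have := hc.map (SimpleGraph.Embedding.induce (copySet r 2 2 i)).toHom
      exact h this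
    rw [SimpleGraph.dist_eq_zero_of_not_reachable h,
      SimpleGraph.dist_eq_zero_of_not_reachable hHr]
end

section
/- For r ≥ 2, if u and v are two vertices of the glued binary tree GT(r) both lying in the same copy T_r^(i) of the perfect binary tree, then there are exactly two shortest u,v-paths in GT(r) if u and v are both quasi-leaves, and otherwise the shortest u,v-path is unique. -/
open SimpleGraph

namespace GTdev

variable {r : ℕ}

/-- projection to the underlying list -/
def pl : gluedVert r 2 2 → List (Fin 2)
  | Sum.inl (_, s) => s.val
  | Sum.inr l => l.val

lemma pl_length_le : ∀ x : gluedVert r 2 2, (pl x).length ≤ r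
  | Sum.inl (_, s) => le_of_lt s.2
  | Sum.inr l => le_of_eq l.2

lemma eq_of_pl_eq : ∀ {a b : gluedVert r 2 2}, pl a = pl b → (pl a).length = r → a = b
  | Sum.inl (_, s), _, _, hr => absurd hr (Nat.ne_of_lt s.2)
  | Sum.inr _, Sum.inl (_, s), h, hr => by
      rw [h] at hr; exact absurd hr (Nat.ne_of_lt s.2)
  | Sum.inr _, Sum.inr _, h, _ => congrArg Sum.inr (Subtype.ext h)

/-- canonical vertex from a list, in copy `j` -/
def mk (j : Fin 2) (l : List (Fin 2)) (h : l.length ≤ r) : gluedVert r 2 2 :=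
  if h' : l.length = r then Sum.inr ⟨l, h'⟩ else Sum.inl (j, ⟨l, lt_of_le_of_ne h h'⟩)

@[simp] lemma pl_mk (j : Fin 2) (l : List (Fin 2)) (h : l.length ≤ r) :
    pl (mk j l h) = l := by
  unfold mk; split <;> rfl

lemma mk_of_lt (j : Fin 2) (l : List (Fin 2)) (h : l.length ≤ r) (h' : l.length < r) :
    mk j l h = Sum.inl (j, ⟨l, h'⟩) := by
  unfold mk; rw [dif_neg (Nat.ne_of_lt h')]

lemma mk_of_eq (j : Fin 2) (l : List (Fin 2)) (h : l.length ≤ r) (h' : l.length = r) :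
    mk j l h = Sum.inr ⟨l, h'⟩ := by
  unfold mk; rw [dif_pos h']

/-- tree neighbour relation at the list level -/
def TN (s s' : List (Fin 2)) : Prop :=
  (s ≠ [] ∧ s' = s.dropLast) ∨ ∃ b, s' = s ++ [b]

/-- tree distance -/
def D (s t : List (Fin 2)) : ℕ :=
  if s <+: t then t.length - s.length else D s.dropLast t + 1
termination_by s.length
decreasing_by
  rename_i h
  have hs : s ≠ [] := by rintro rfl; exact h List.nil_prefix
  have : 0 < s.length := List.length_pos_iff.mpr hs
  simp only [List.length_dropLast]
  omega

lemma D_prefix {s t : List (Fin 2)} (h : s <+: t) : D s t = t.length - s.length := by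
  rw [D.eq_def, if_pos h]

lemma D_not_prefix {s t : List (Fin 2)} (h : ¬ s <+: t) : D s t = D s.dropLast t + 1 := by
  rw [D.eq_def, if_neg h]

lemma D_self (s : List (Fin 2)) : D s s = 0 := by
  rw [D_prefix (List.prefix_refl s), Nat.sub_self]

lemma D_eq_zero {s t : List (Fin 2)} (h : D s t = 0) : s = t := by
  by_cases hp : s <+: t
  · rw [D_prefix hp] at h
    exact hp.eq_of_length (le_antisymm hp.length_le (by omega))
  · rw [D_not_prefix hp] at h; omega

lemma concat_prefix_of_prefix {s t : List (Fin 2)} {b : Fin 2} (h : s ++ [b] <+: t) :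
    s <+: t := ((s.prefix_append [b]).trans h)

lemma K1 {s t : List (Fin 2)} (b : Fin 2) : D s t ≤ D (s ++ [b]) t + 1 := by
  by_cases h : s ++ [b] <+: t
  · have hs : s <+: t := concat_prefix_of_prefix h
    have h1 : s.length + 1 ≤ t.length := by simpa using h.length_le
    rw [D_prefix h, D_prefix hs]
    simp only [List.length_append, List.length_cons, List.length_nil]
    omega
  · rw [D_not_prefix h, List.dropLast_concat]
    omega

lemma K2 {s t : List (Fin 2)} (b : Fin 2) : D (s ++ [b]) t ≤ D s t + 1 := by
  by_cases h : s ++ [b] <+: t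
  · have hs : s <+: t := concat_prefix_of_prefix h
    rw [D_prefix h, D_prefix hs]
    simp only [List.length_append, List.length_cons, List.length_nil]
    omega
  · rw [D_not_prefix h, List.dropLast_concat]

lemma length_lt_of_proper_prefix {s t : List (Fin 2)} (h : s <+: t) (hne : s ≠ t) :
    s.length < t.length := by
  rcases Nat.lt_or_ge s.length t.length with h' | h'
  · exact h'
  · exact absurd (h.eq_of_length (le_antisymm h.length_le h')) hne

lemma D_take_succ {s t : List (Fin 2)} (h : s <+: t) (hne : s ≠ t) :
    D (t.take (s.length + 1)) t + 1 = D s t := by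
  have hlt := length_lt_of_proper_prefix h hne
  have htp : t.take (s.length + 1) <+: t := List.take_prefix _ t
  rw [D_prefix h, D_prefix htp, List.length_take]
  omega

lemma take_eq_concat {s t : List (Fin 2)} (h : s <+: t) (hne : s ≠ t) :
    t.take (s.length + 1) = s ++ [t.get ⟨s.length, length_lt_of_proper_prefix h hne⟩] := by
  have hlt := length_lt_of_proper_prefix h hne
  rw [List.take_succ, ← List.prefix_iff_eq_take.mp h]
  congr 1
  rw [List.getElem?_eq_getElem hlt]
  rfl

/-- classification of the D-decreasing tree-neighbour -/
lemma K3 {s s' t : List (Fin 2)} (hn : TN s s') (hd : D s' t < D s t) :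
    (s <+: t ∧ s ≠ t ∧ s' = t.take (s.length + 1)) ∨ (¬ s <+: t ∧ s' = s.dropLast) := by
  by_cases hp : s <+: t
  · left
    have hne : s ≠ t := by
      rintro rfl
      rw [D_self] at hd; omega
    refine ⟨hp, hne, ?_⟩
    rcases hn with ⟨hs0, rfl⟩ | ⟨b, rfl⟩
    · -- dropLast increases D when s <+: t
      exfalso
      have hdp : s.dropLast <+: t := (s.dropLast_prefix).trans hp
      have h1 : s.length ≤ t.length := hp.length_le
      have h2 : s.dropLast.length = s.length - 1 := s.length_dropLast
      rw [D_prefix hp, D_prefix hdp, h2] at hd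
      have : 0 < s.length := List.length_pos_iff.mpr hs0
      omega
    · -- child: must be prefix
      by_cases hc : s ++ [b] <+: t
      · rw [List.prefix_iff_eq_take.mp hc]
        congr 1
        simp
      · rw [D_not_prefix hc, List.dropLast_concat] at hd; omega
  · right
    refine ⟨hp, ?_⟩
    rcases hn with ⟨hs0, rfl⟩ | ⟨b, rfl⟩
    · rfl
    · exfalso
      have hc : ¬ s ++ [b] <+: t := fun h => hp (concat_prefix_of_prefix h)
      rw [D_not_prefix hc, List.dropLast_concat] at hd; omega

@[simp] lemma pl_inl (j : Fin 2) (s : {l : List (Fin 2) // l.length < r}) :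
    pl (Sum.inl (j, s) : gluedVert r 2 2) = s.val := rfl

@[simp] lemma pl_inr (l : {l : List (Fin 2) // l.length = r}) :
    pl (Sum.inr l : gluedVert r 2 2) = l.val := rfl

lemma mk_congr (j : Fin 2) {l l' : List (Fin 2)} (e : l = l') (h : l.length ≤ r)
    (h' : l'.length ≤ r) : mk j l h = mk j l' h' := by subst e; rfl

lemma adj_iff {x z : gluedVert r 2 2} :
    (gluedTree r 2 2).Adj x z ↔ x ≠ z ∧ (gluedAdj r 2 2 x z ∨ gluedAdj r 2 2 z x) :=
  SimpleGraph.fromRel_adj _ _ _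

lemma rel_pl : ∀ {x z : gluedVert r 2 2}, gluedAdj r 2 2 x z → ∃ b, pl z = pl x ++ [b]
  | Sum.inl (_, _), Sum.inl (_, _), ⟨_, b, hb⟩ => ⟨b, hb⟩
  | Sum.inl (_, _), Sum.inr _, ⟨b, hb⟩ => ⟨b, hb⟩
  | Sum.inr _, _, h => h.elim

lemma adj_of_rel {x z : gluedVert r 2 2} (h : gluedAdj r 2 2 x z) :
    (gluedTree r 2 2).Adj x z := by
  rw [adj_iff]
  refine ⟨?_, Or.inl h⟩
  rintro rfl
  obtain ⟨b, hb⟩ := rel_pl h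
  simpa using congrArg List.length hb

lemma D_le_adj (t : List (Fin 2)) {x z : gluedVert r 2 2}
    (h : (gluedTree r 2 2).Adj x z) : D (pl x) t ≤ D (pl z) t + 1 := by
  rw [adj_iff] at h
  rcases h.2 with h | h
  · obtain ⟨b, hb⟩ := rel_pl h
    rw [hb]; exact K1 b
  · obtain ⟨b, hb⟩ := rel_pl h
    rw [hb]; exact K2 b

lemma adj_mk (j : Fin 2) (b : Fin 2) (s : List (Fin 2)) (h1 : s.length ≤ r)
    (h2 : (s ++ [b]).length ≤ r) :
    (gluedTree r 2 2).Adj (mk j s h1) (mk j (s ++ [b]) h2) := by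
  apply adj_of_rel
  have hs : s.length < r := by simp at h2; omega
  rw [mk_of_lt j s h1 hs]
  by_cases h' : (s ++ [b]).length = r
  · rw [mk_of_eq _ _ _ h']; exact ⟨b, rfl⟩
  · rw [mk_of_lt _ _ _ (lt_of_le_of_ne h2 h')]; exact ⟨rfl, b, rfl⟩

lemma adj_inl {j : Fin 2} {s : {l : List (Fin 2) // l.length < r}} {z : gluedVert r 2 2}
    (ha : (gluedTree r 2 2).Adj (Sum.inl (j, s)) z) :
    ∃ (L : List (Fin 2)) (h : L.length ≤ r), z = mk j L h ∧ TN s.val L := by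
  rw [adj_iff] at ha
  rcases ha with ⟨hne, h | h⟩
  · cases z with
    | inl p =>
      obtain ⟨j', s'⟩ := p
      obtain ⟨hj, b, hb⟩ := h
      refine ⟨s'.val, le_of_lt s'.2, ?_, Or.inr ⟨b, hb⟩⟩
      rw [mk_of_lt _ _ _ s'.2]; cases hj; rfl
    | inr l =>
      obtain ⟨b, hb⟩ := h
      refine ⟨l.val, le_of_eq l.2, ?_, Or.inr ⟨b, hb⟩⟩
      rw [mk_of_eq _ _ _ l.2]
  · cases z with
    | inl p =>
      obtain ⟨j', s'⟩ := p
      obtain ⟨hj, b, hb⟩ := h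
      refine ⟨s'.val, le_of_lt s'.2, ?_, Or.inl ⟨by simp [hb], ?_⟩⟩
      · rw [mk_of_lt _ _ _ s'.2]; cases hj; rfl
      · rw [hb, List.dropLast_concat]
    | inr l => exact h.elim

lemma adj_inr {l : {l : List (Fin 2) // l.length = r}} {z : gluedVert r 2 2}
    (ha : (gluedTree r 2 2).Adj (Sum.inr l) z) :
    ∃ (j : Fin 2) (h : l.val.dropLast.length < r),
      z = Sum.inl (j, ⟨l.val.dropLast, h⟩) ∧ l.val ≠ [] := by
  rw [adj_iff] at ha
  rcases ha with ⟨hne, h | h⟩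
  · exact h.elim
  · cases z with
    | inl p =>
      obtain ⟨j', s'⟩ := p
      obtain ⟨b, hb⟩ := h
      have hds : s'.val = l.val.dropLast := by rw [hb, List.dropLast_concat]
      refine ⟨j', hds ▸ s'.2, ?_, by simp [hb]⟩
      exact congrArg (fun a => Sum.inl (j', a)) (Subtype.ext hds)
    | inr m => exact h.elim

lemma length_ge {x y : gluedVert r 2 2} (p : (gluedTree r 2 2).Walk x y) :
    D (pl x) (pl y) ≤ p.length := by
  induction p with
  | nil => simp [D_self]
  | cons h p ih =>
    rw [SimpleGraph.Walk.length_cons]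
    calc D (pl _) (pl _) ≤ D (pl _) (pl _) + 1 := D_le_adj _ h
    _ ≤ p.length + 1 := by omega

lemma shortest_path {x y : gluedVert r 2 2} (p : (gluedTree r 2 2).Walk x y)
    (hl : p.length = D (pl x) (pl y)) :
    p.IsPath ∧ ∀ z ∈ p.support, D (pl z) (pl y) ≤ p.length := by
  induction p with
  | nil =>
    refine ⟨SimpleGraph.Walk.IsPath.nil, ?_⟩
    intro z hz
    simp only [SimpleGraph.Walk.support_nil, List.mem_singleton] at hz
    subst hz
    simp [D_self]
  | @cons u w v h p ih =>
    rw [SimpleGraph.Walk.length_cons] at hl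
    have h1 : D (pl w) (pl v) ≤ p.length := length_ge p
    have h2 : D (pl u) (pl v) ≤ D (pl w) (pl v) + 1 := D_le_adj _ h
    have h3 : p.length = D (pl w) (pl v) := by omega
    obtain ⟨hp, hb⟩ := ih h3
    constructor
    · refine hp.cons ?_
      intro hmem
      have := hb u hmem
      omega
    · intro z hz
      rw [SimpleGraph.Walk.support_cons, List.mem_cons] at hz
      rw [SimpleGraph.Walk.length_cons]
      rcases hz with rfl | hz
      · omega
      · have := hb z hz; omega


lemma unique_shortest : ∀ n : ℕ, ∀ {x y : gluedVert r 2 2}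
    (p q : (gluedTree r 2 2).Walk x y),
    ((∃ j s, x = Sum.inl (j, s)) ∨ x = y) →
    p.length = n → q.length = n → n = D (pl x) (pl y) → p = q := by
  intro n
  induction n using Nat.strong_induction_on with
  | _ n ih =>
  intro x y p q hx hp hq hD
  cases n with
  | zero =>
    have hxy : x = y := SimpleGraph.Walk.eq_of_length_eq_zero hp
    subst hxy
    have hp' : p = SimpleGraph.Walk.nil := by
      cases p with
      | nil => rfl
      | cons h p => simp at hp
    have hq' : q = SimpleGraph.Walk.nil := by
      cases q with
      | nil => rfl
      | cons h q => simp at hq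
    rw [hp', hq']
  | succ m =>
    rcases hx with ⟨j, s, rfl⟩ | rfl
    swap
    · rw [D_self] at hD; omega
    cases p with
    | nil => simp at hp
    | @cons _ z1 _ h1 p1 =>
      cases q with
      | nil => simp at hq
      | @cons _ z2 _ h2 q1 =>
        rw [SimpleGraph.Walk.length_cons] at hp hq
        have e1 : D (pl z1) (pl y) = m := by
          have hle := length_ge p1
          have := D_le_adj (pl y) h1
          omega
        have e2 : D (pl z2) (pl y) = m := by
          have hle := length_ge q1
          have := D_le_adj (pl y) h2
          omega
        obtain ⟨L1, hL1, hz1, hTN1⟩ := adj_inl h1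
        obtain ⟨L2, hL2, hz2, hTN2⟩ := adj_inl h2
        have epl1 : pl z1 = L1 := by rw [hz1, pl_mk]
        have epl2 : pl z2 = L2 := by rw [hz2, pl_mk]
        have hDs : m + 1 = D s.val (pl y) := hD
        have hdec1 : D L1 (pl y) < D s.val (pl y) := by rw [← epl1]; omega
        have hdec2 : D L2 (pl y) < D s.val (pl y) := by rw [← epl2]; omega
        have hK1 := K3 hTN1 hdec1
        have hK2 := K3 hTN2 hdec2
        have eL : L1 = L2 := by
          rcases hK1 with ⟨hpre, hne, hL⟩ | ⟨hnpre, hL⟩ <;>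
            rcases hK2 with ⟨hpre', hne', hL'⟩ | ⟨hnpre', hL'⟩
          · rw [hL, hL']
          · exact absurd hpre hnpre'
          · exact absurd hpre' hnpre
          · rw [hL, hL']
        have ez : z2 = z1 := by
          rw [hz1, hz2]
          exact (mk_congr j eL hL1 hL2).symm
        subst ez
        have hx' : (∃ j' s', z2 = Sum.inl (j', s')) ∨ z2 = y := by
          by_cases hLr : L1.length = r
          · right
            have hLy : L1 = pl y := by
              rcases hK1 with ⟨hpre, hne, hL⟩ | ⟨hnpre, hL⟩
              · have hpre2 : L1 <+: pl y := by
                  rw [hL]; exact List.take_prefix _ _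
                refine hpre2.eq_of_length ?_
                have h5 := pl_length_le y
                have h6 := hpre2.length_le
                omega
              · exfalso
                have : L1.length < r := by
                  rw [hL, List.length_dropLast]
                  have := s.2
                  omega
                omega
            apply eq_of_pl_eq
            · rw [epl1, hLy]
            · rw [epl1]; exact hLr
          · left
            exact ⟨j, ⟨L1, lt_of_le_of_ne hL1 hLr⟩, by
              rw [hz1, mk_of_lt _ _ _ (lt_of_le_of_ne hL1 hLr)]⟩
        have heq : p1 = q1 := by
          rw [epl1] at e1
          refine ih m (by omega) p1 q1 hx' (by omega) (by omega) ?_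
          rw [epl1]
          omega
        rw [heq]

lemma exists_geodesic : ∀ n : ℕ, ∀ (j : Fin 2) (s t : List (Fin 2))
    (hs : s.length ≤ r) (ht : t.length ≤ r), D s t = n →
    ∃ p : (gluedTree r 2 2).Walk (mk j s hs) (mk j t ht), p.length = n := by
  intro n
  induction n using Nat.strong_induction_on with
  | _ n ih =>
  intro j s t hs ht hD
  cases n with
  | zero =>
    have hst : s = t := D_eq_zero hD
    subst hst
    exact ⟨SimpleGraph.Walk.nil, rfl⟩
  | succ m =>
    by_cases hp : s <+: t
    · have hne : s ≠ t := by rintro rfl; rw [D_self] at hD; omega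
      have hlt := length_lt_of_proper_prefix hp hne
      obtain ⟨b, hb⟩ : ∃ b, t.take (s.length + 1) = s ++ [b] :=
        ⟨_, take_eq_concat hp hne⟩
      have hcr : (s ++ [b]).length ≤ r := by
        simp only [List.length_append, List.length_cons, List.length_nil]
        omega
      have hDc : D (s ++ [b]) t = m := by
        have h := D_take_succ hp hne
        rw [hb] at h
        omega
      obtain ⟨p', hp'⟩ := ih m (by omega) j (s ++ [b]) t hcr ht hDc
      exact ⟨SimpleGraph.Walk.cons (adj_mk j b s hs hcr) p', by simp [hp']⟩
    · have hs0 : s ≠ [] := by rintro rfl; exact hp List.nil_prefix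
      have hDd : D s.dropLast t = m := by rw [D_not_prefix hp] at hD; omega
      have hdr : s.dropLast.length ≤ r := by
        rw [List.length_dropLast]; omega
      obtain ⟨p', hp'⟩ := ih m (by omega) j s.dropLast t hdr ht hDd
      have he : s.dropLast ++ [s.getLast hs0] = s := List.dropLast_append_getLast hs0
      have hadj : (gluedTree r 2 2).Adj (mk j s.dropLast hdr) (mk j s hs) := by
        have h2 : (s.dropLast ++ [s.getLast hs0]).length ≤ r := by rw [he]; exact hs
        have := adj_mk j (s.getLast hs0) s.dropLast hdr h2
        rwa [mk_congr j he h2 hs] at this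
      exact ⟨SimpleGraph.Walk.cons hadj.symm p', by simp [hp']⟩

lemma dist_mk (j : Fin 2) (s t : List (Fin 2)) (hs : s.length ≤ r) (ht : t.length ≤ r) :
    (gluedTree r 2 2).dist (mk j s hs) (mk j t ht) = D s t := by
  obtain ⟨p, hp⟩ := exists_geodesic (D s t) j s t hs ht rfl
  refine le_antisymm (hp ▸ SimpleGraph.dist_le p) ?_
  obtain ⟨q, hq1, hq2⟩ := Reachable.exists_path_of_dist ⟨p⟩
  calc D s t = D (pl (mk j s hs)) (pl (mk j t ht)) := by rw [pl_mk, pl_mk]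
  _ ≤ q.length := length_ge q
  _ = _ := hq2

lemma ncard_rev {W : Type*} (G : SimpleGraph W) (u v : W) :
    {p : G.Walk u v | p.IsPath ∧ p.length = G.dist u v}.ncard
      = {p : G.Walk v u | p.IsPath ∧ p.length = G.dist v u}.ncard := by
  have himg : {p : G.Walk v u | p.IsPath ∧ p.length = G.dist v u}
      = SimpleGraph.Walk.reverse '' {p : G.Walk u v | p.IsPath ∧ p.length = G.dist u v} := by
    ext q
    constructor
    · rintro ⟨hq1, hq2⟩
      refine ⟨q.reverse, ⟨(SimpleGraph.Walk.isPath_reverse_iff q).mpr hq1, ?_⟩,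
        SimpleGraph.Walk.reverse_reverse q⟩
      rw [SimpleGraph.Walk.length_reverse, hq2, SimpleGraph.dist_comm]
    · rintro ⟨p, ⟨hp1, hp2⟩, rfl⟩
      refine ⟨(SimpleGraph.Walk.isPath_reverse_iff p).mpr hp1, ?_⟩
      rw [SimpleGraph.Walk.length_reverse, hp2, SimpleGraph.dist_comm]
  rw [himg, Set.ncard_image_of_injective _ SimpleGraph.Walk.reverse_injective]

lemma count_one {x y : gluedVert r 2 2}
    (hx : (∃ j s, x = Sum.inl (j, s)) ∨ x = y)
    (hreach : (gluedTree r 2 2).Reachable x y)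
    (hd : (gluedTree r 2 2).dist x y = D (pl x) (pl y)) :
    {p : (gluedTree r 2 2).Walk x y |
      p.IsPath ∧ p.length = (gluedTree r 2 2).dist x y}.ncard = 1 := by
  obtain ⟨p0, hp0, hl0⟩ := hreach.exists_path_of_dist
  rw [Set.ncard_eq_one]
  refine ⟨p0, ?_⟩
  ext q
  simp only [Set.mem_setOf_eq, Set.mem_singleton_iff]
  constructor
  · rintro ⟨hq, hlq⟩
    exact unique_shortest ((gluedTree r 2 2).dist x y) q p0 hx hlq hl0 hd
  · rintro rfl
    exact ⟨hp0, hl0⟩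

lemma mem_copySet_mk {i : Fin 2} {x : gluedVert r 2 2} (hx : x ∈ copySet r 2 2 i) :
    x = mk i (pl x) (pl_length_le x) := by
  rcases hx with ⟨s, rfl⟩ | ⟨l, rfl⟩
  · simp only [pl_inl]
    rw [mk_of_lt _ _ _ s.2]
  · simp only [pl_inr]
    rw [mk_of_eq _ _ _ l.2]

lemma count_two (hr : 1 ≤ r) {lu lv : {l : List (Fin 2) // l.length = r}} (hne : lu ≠ lv) :
    {p : (gluedTree r 2 2).Walk (Sum.inr lu) (Sum.inr lv) |
      p.IsPath ∧ p.length = (gluedTree r 2 2).dist (Sum.inr lu) (Sum.inr lv)}.ncard = 2 := by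
  have hnp : ¬ lu.val <+: lv.val := by
    intro h
    exact hne (Subtype.ext (h.eq_of_length (by rw [lu.2, lv.2])))
  have hs0 : lu.val ≠ [] := by
    intro h
    exact hnp (h ▸ List.nil_prefix)
  have hdlen : lu.val.dropLast.length < r := by
    rw [List.length_dropLast, lu.2]
    have : 0 < lu.val.length := List.length_pos_iff.mpr hs0
    omega
  have hD : D lu.val lv.val = D lu.val.dropLast lv.val + 1 := D_not_prefix hnp
  set m := D lu.val.dropLast lv.val with hm
  have hxmk : (Sum.inr lu : gluedVert r 2 2) = mk 0 lu.val (le_of_eq lu.2) :=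
    (mk_of_eq _ _ _ lu.2).symm
  have hymk : (Sum.inr lv : gluedVert r 2 2) = mk 0 lv.val (le_of_eq lv.2) :=
    (mk_of_eq _ _ _ lv.2).symm
  have hdist : (gluedTree r 2 2).dist (Sum.inr lu) (Sum.inr lv) = m + 1 := by
    rw [hxmk, hymk, dist_mk, hD]
  have hadj : ∀ j : Fin 2,
      (gluedTree r 2 2).Adj (Sum.inr lu) (Sum.inl (j, ⟨lu.val.dropLast, hdlen⟩)) := by
    intro j
    rw [adj_iff]
    refine ⟨by simp, Or.inr ?_⟩
    exact ⟨lu.val.getLast hs0, (List.dropLast_append_getLast hs0).symm⟩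
  have hE : ∀ j : Fin 2, ∃ q : (gluedTree r 2 2).Walk
      (Sum.inl (j, ⟨lu.val.dropLast, hdlen⟩)) (Sum.inr lv), q.length = m := by
    intro j
    obtain ⟨p', hp'⟩ := exists_geodesic m j lu.val.dropLast lv.val
      (le_of_lt hdlen) (le_of_eq lv.2) rfl
    refine ⟨p'.copy (mk_of_lt _ _ _ hdlen) (mk_of_eq _ _ _ lv.2), ?_⟩
    rw [SimpleGraph.Walk.length_copy]
    exact hp'
  choose Q hQ using hE
  set P : Fin 2 → (gluedTree r 2 2).Walk (Sum.inr lu) (Sum.inr lv) :=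
    fun j => SimpleGraph.Walk.cons (hadj j) (Q j) with hP
  have hPlen : ∀ j, (P j).length = m + 1 := by
    intro j
    rw [hP]
    simp [hQ]
  have hPmem : ∀ j, P j ∈ {p : (gluedTree r 2 2).Walk (Sum.inr lu) (Sum.inr lv) |
      p.IsPath ∧ p.length = (gluedTree r 2 2).dist (Sum.inr lu) (Sum.inr lv)} := by
    intro j
    have hlen : (P j).length = D (pl (Sum.inr lu : gluedVert r 2 2)) (pl (Sum.inr lv : gluedVert r 2 2)) := by
      rw [hPlen j, pl_inr, pl_inr, hD]
    exact ⟨(shortest_path (P j) hlen).1, by rw [hPlen j, hdist]⟩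
  have hfin2 : ∀ a : Fin 2, a = 0 ∨ a = 1 := by decide
  have hSeq : {p : (gluedTree r 2 2).Walk (Sum.inr lu) (Sum.inr lv) |
      p.IsPath ∧ p.length = (gluedTree r 2 2).dist (Sum.inr lu) (Sum.inr lv)} = {P 0, P 1} := by
    ext q
    simp only [Set.mem_setOf_eq, Set.mem_insert_iff, Set.mem_singleton_iff]
    constructor
    · rintro ⟨hq, hlq⟩
      rw [hdist] at hlq
      cases q with
      | nil => simp at hlq
      | @cons _ z1 _ h1 q1 =>
        rw [SimpleGraph.Walk.length_cons] at hlq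
        obtain ⟨j', hlen', hz1, _⟩ := adj_inr h1
        have hz1' : z1 = Sum.inl (j', ⟨lu.val.dropLast, hdlen⟩) := by
          rw [hz1]
        subst hz1'
        have hq1 : q1 = Q j' := by
          refine unique_shortest m q1 (Q j') (Or.inl ⟨j', _, rfl⟩) (by omega) (hQ j') ?_
          rw [pl_inl, pl_inr]
        have hqP : SimpleGraph.Walk.cons h1 q1 = P j' := by
          rw [hP, hq1]
        rcases hfin2 j' with rfl | rfl
        · left; exact hqP
        · right; exact hqP
    · rintro (rfl | rfl)
      · exact hPmem 0
      · exact hPmem 1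
  have hPne : P 0 ≠ P 1 := by
    intro h
    have h2 := congrArg SimpleGraph.Walk.support h
    rw [hP] at h2
    simp only [SimpleGraph.Walk.support_cons] at h2
    have h3 : (Q 0).support = (Q 1).support := by
      simpa using h2
    rw [SimpleGraph.Walk.support_eq_cons (Q 0), SimpleGraph.Walk.support_eq_cons (Q 1)] at h3
    simp only [List.cons.injEq] at h3
    have := h3.1
    simp at this
  rw [hSeq]
  exact Set.ncard_pair hPne

lemma reach_and_dist {i : Fin 2} {u v : gluedVert r 2 2}
    (hu : u ∈ copySet r 2 2 i) (hv : v ∈ copySet r 2 2 i) :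
    (gluedTree r 2 2).Reachable u v ∧
      (gluedTree r 2 2).dist u v = D (pl u) (pl v) := by
  have hu' := mem_copySet_mk hu
  have hv' := mem_copySet_mk hv
  constructor
  · rw [hu', hv']
    obtain ⟨p, _⟩ := exists_geodesic (D (pl u) (pl v)) i (pl u) (pl v)
      (pl_length_le u) (pl_length_le v) rfl
    exact ⟨p⟩
  · rw [hu', hv', dist_mk]
    simp [pl_mk]

end GTdev

theorem stmt3 (r : ℕ) (hr : 2 ≤ r) (i : Fin 2) (u v : gluedVert r 2 2)
    (hu : u ∈ copySet r 2 2 i) (hv : v ∈ copySet r 2 2 i) (huv : u ≠ v) :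
    ((u ∈ quasiLeaves r 2 2 ∧ v ∈ quasiLeaves r 2 2) →
      {p : (gluedTree r 2 2).Walk u v |
        p.IsPath ∧ p.length = (gluedTree r 2 2).dist u v}.ncard = 2) ∧
    (¬ (u ∈ quasiLeaves r 2 2 ∧ v ∈ quasiLeaves r 2 2) →
      {p : (gluedTree r 2 2).Walk u v |
        p.IsPath ∧ p.length = (gluedTree r 2 2).dist u v}.ncard = 1) := by
  constructor
  · rintro ⟨⟨lu, rfl⟩, ⟨lv, rfl⟩⟩
    have hne : lu ≠ lv := fun h => huv (congrArg Sum.inr h)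
    exact GTdev.count_two (by omega) hne
  · intro hnq
    by_cases hqu : u ∈ quasiLeaves r 2 2
    · have hqv : v ∉ quasiLeaves r 2 2 := fun h => hnq ⟨hqu, h⟩
      rcases hv with ⟨t, rfl⟩ | h
      swap
      · exact absurd h hqv
      have hv' : (Sum.inl (i, t) : gluedVert r 2 2) ∈ copySet r 2 2 i := Or.inl ⟨t, rfl⟩
      obtain ⟨hreach, hdist⟩ := GTdev.reach_and_dist hv' hu
      rw [GTdev.ncard_rev]
      exact GTdev.count_one (Or.inl ⟨i, t, rfl⟩) hreach hdist
    · rcases hu with ⟨s, rfl⟩ | h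
      swap
      · exact absurd h hqu
      have hu' : (Sum.inl (i, s) : gluedVert r 2 2) ∈ copySet r 2 2 i := Or.inl ⟨s, rfl⟩
      obtain ⟨hreach, hdist⟩ := GTdev.reach_and_dist hu' hv
      exact GTdev.count_one (Or.inl ⟨i, s, rfl⟩) hreach hdist
end

section
/- For r ≥ 2, a vertex u of the glued binary tree GT(r) is a quasi-leaf if and only if deg(u) = 2 and u lies on a cycle of length 4. -/
open SimpleGraph

/-- Auxiliary: the underlying list of a vertex. -/
def gluedList {r n t : ℕ} : gluedVert r n t → List (Fin t)
  | Sum.inl (_, s) => s.val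
  | Sum.inr l => l.val

lemma glued_adj_iff {r n t : ℕ} {x y : gluedVert r n t} :
    (gluedTree r n t).Adj x y ↔ x ≠ y ∧ (gluedAdj r n t x y ∨ gluedAdj r n t y x) :=
  SimpleGraph.fromRel_adj _ _ _

theorem stmt4 (r : ℕ) (hr : 2 ≤ r) (u : gluedVert r 2 2) :
    u ∈ quasiLeaves r 2 2 ↔
      ((gluedTree r 2 2).neighborSet u).ncard = 2 ∧
      ∃ p : (gluedTree r 2 2).Walk u u, p.IsCycle ∧ p.length = 4 := by
  constructor
  · rintro ⟨l, rfl⟩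
    have hl : l.val.length = r := l.2
    have hne : l.val ≠ [] := by
      intro h; rw [h] at hl; simp at hl; omega
    have hpb : l.val.dropLast ++ [l.val.getLast hne] = l.val :=
      List.dropLast_append_getLast hne
    have hplen : l.val.dropLast.length + 1 = r := by
      have := congrArg List.length hpb
      rw [List.length_append, List.length_singleton, hl] at this
      exact this
    have hplt : l.val.dropLast.length < r := by omega
    set p := l.val.dropLast with hp
    set b := l.val.getLast hne with hb
    set P : {l : List (Fin 2) // l.length < r} := ⟨p, hplt⟩ with hP
    have h01 : (Sum.inl (0, P) : gluedVert r 2 2) ≠ Sum.inl (1, P) := by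
      simp [Fin.ext_iff]
    have hadj0 : (gluedTree r 2 2).Adj (Sum.inr l) (Sum.inl (0, P)) := by
      rw [glued_adj_iff]
      exact ⟨by simp, Or.inr ⟨b, hpb.symm⟩⟩
    have hadj1 : (gluedTree r 2 2).Adj (Sum.inr l) (Sum.inl (1, P)) := by
      rw [glued_adj_iff]
      exact ⟨by simp, Or.inr ⟨b, hpb.symm⟩⟩
    constructor
    · have hns : (gluedTree r 2 2).neighborSet (Sum.inr l) =
          {Sum.inl (0, P), Sum.inl (1, P)} := by
        ext x
        simp only [mem_neighborSet, Set.mem_insert_iff, Set.mem_singleton_iff]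
        constructor
        · intro hx
          rw [glued_adj_iff] at hx
          obtain ⟨-, hx⟩ := hx
          rcases x with ⟨i, s⟩ | l'
          · rcases hx with hx | hx
            · exact hx.elim
            · obtain ⟨b', hb'⟩ := hx
              have hsP : s = P := by
                apply Subtype.ext
                show s.val = p
                rw [hp, hb', List.dropLast_concat]
              fin_cases i
              · exact Or.inl (by subst hsP; rfl)
              · exact Or.inr (by subst hsP; rfl)
          · rcases hx with hx | hx <;> exact hx.elim
        · rintro (rfl | rfl)
          · exact hadj0
          · exact hadj1
      rw [hns]
      exact Set.ncard_pair h01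
    · have hmlen : (p ++ [b + 1]).length = r := by
        simp
        omega
      have hbne : b + 1 ≠ b := by
        intro h
        have h2 : b + 1 = b + 0 := by rw [add_zero]; exact h
        have h3 := add_left_cancel h2
        exact absurd h3 (by decide)
      have hmu : (Sum.inr ⟨p ++ [b + 1], hmlen⟩ : gluedVert r 2 2) ≠ Sum.inr l := by
        intro h
        have h1 : p ++ [b + 1] = l.val := congrArg Subtype.val (Sum.inr.inj h)
        rw [← hpb] at h1
        have := List.append_inj_right h1 rfl
        simp at this
      have ha2 : (gluedTree r 2 2).Adj (Sum.inl (0, P))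
          (Sum.inr ⟨p ++ [b + 1], hmlen⟩) := by
        rw [glued_adj_iff]
        exact ⟨by simp, Or.inl ⟨b + 1, rfl⟩⟩
      have ha3 : (gluedTree r 2 2).Adj (Sum.inr ⟨p ++ [b + 1], hmlen⟩)
          (Sum.inl (1, P)) := by
        rw [glued_adj_iff]
        exact ⟨by simp, Or.inr ⟨b + 1, rfl⟩⟩
      have ha4 : (gluedTree r 2 2).Adj (Sum.inl (1, P)) (Sum.inr l) := by
        rw [glued_adj_iff]
        exact ⟨by simp, Or.inl ⟨b, hpb.symm⟩⟩
      refine ⟨Walk.cons hadj0 (Walk.cons ha2 (Walk.cons ha3 (Walk.cons ha4 Walk.nil))),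
        ?_, by simp⟩
      have hq : (Walk.cons ha2 (Walk.cons ha3 (Walk.cons ha4 Walk.nil))).IsPath := by
        rw [Walk.isPath_def]
        simp [hmu, h01]
      rw [Walk.cons_isCycle_iff]
      refine ⟨hq, ?_⟩
      simp [Sym2.eq, Sym2.rel_iff', h01, hmu]
      intro h
      exact hmu (congrArg Sum.inr h.symm)
  · rintro ⟨hdeg, p, hcyc, hlen⟩
    rcases u with ⟨i, s⟩ | l
    · exfalso
      by_cases hs : s.val = []
      · -- root case: no 4-cycle through the root
        have neigh : ∀ x : gluedVert r 2 2, (gluedTree r 2 2).Adj (Sum.inl (i, s)) x →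
            ∃ (ba : Fin 2) (h' : [ba].length < r), x = Sum.inl (i, ⟨[ba], h'⟩) := by
          intro x hx
          rw [glued_adj_iff] at hx
          obtain ⟨hne, hx⟩ := hx
          rcases x with ⟨j, s'⟩ | l'
          · rcases hx with ⟨hij, b', hb'⟩ | ⟨hij, b', hb'⟩
            · refine ⟨b', by simp; omega, ?_⟩
              rw [← hij]
              exact congrArg (fun z => Sum.inl (i, z))
                (Subtype.ext (by rw [hb', hs]; simp))
            · rw [hs] at hb'
              simp at hb'
          · rcases hx with ⟨b', hb'⟩ | hx
            · have h2 := l'.2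
              rw [hb', hs] at h2
              simp at h2
              omega
            · exact hx.elim
        have step : ∀ (ba : Fin 2) (h' : [ba].length < r) (x : gluedVert r 2 2),
            (gluedTree r 2 2).Adj (Sum.inl (i, ⟨[ba], h'⟩)) x →
            x = Sum.inl (i, s) ∨ ∃ d, gluedList x = [ba, d] := by
          intro ba h' x hx
          rw [glued_adj_iff] at hx
          obtain ⟨hne, hx⟩ := hx
          rcases x with ⟨j, s'⟩ | l'
          · rcases hx with ⟨hij, b', hb'⟩ | ⟨hij, b', hb'⟩
            · right; exact ⟨b', by simp [gluedList, hb']⟩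
            · left
              have hs' : s'.val = [] := by
                have := congrArg List.length hb'
                simp at this
                exact this
              rw [hij]
              exact congrArg (fun z => Sum.inl (i, z))
                (Subtype.ext (by rw [hs', hs]))
          · rcases hx with ⟨b', hb'⟩ | hx
            · right; exact ⟨b', by simp [gluedList, hb']⟩
            · exact hx.elim
        cases p with
        | nil => simp at hlen
        | cons h1 q1 =>
        rename_i a
        cases q1 with
        | nil => simp at hlen
        | cons h2 q2 =>
        rename_i bb
        cases q2 with
        | nil => simp at hlen
        | cons h3 q3 =>
        rename_i c
        cases q3 with
        | nil => simp at hlen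
        | cons h4 q4 =>
        cases q4 with
        | cons h5 q5 => simp at hlen
        | nil =>
          have hnd := hcyc.support_nodup
          simp at hnd
          obtain ⟨⟨hab, hac, hau⟩, ⟨hbc, hbu⟩, hcu⟩ := hnd
          obtain ⟨ba, hba', ha⟩ := neigh a h1
          obtain ⟨bc, hbc', hc⟩ := neigh c h4.symm
          subst ha
          subst hc
          rcases step ba hba' bb h2 with hb | ⟨d, hd⟩
          · exact hbu hb
          rcases step bc hbc' bb h3.symm with hb | ⟨d', hd'⟩
          · exact hbu hb
          rw [hd] at hd'
          simp at hd'
          apply hac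
          exact congrArg (fun z => Sum.inl (i, z)) (Subtype.ext (by rw [hd'.1]))
      · -- internal non-root vertex has degree 3
        have hslen : s.val.length < r := s.2
        have hsl : 1 ≤ s.val.length := List.length_pos_iff.mpr hs
        have hdlt : s.val.dropLast.length < r := by simp; omega
        have hadjc : ∀ bb : Fin 2, ∃ x : gluedVert r 2 2,
            (gluedTree r 2 2).Adj (Sum.inl (i, s)) x ∧ gluedList x = s.val ++ [bb] := by
          intro bb
          by_cases h1 : s.val.length + 1 < r
          · refine ⟨Sum.inl (i, ⟨s.val ++ [bb], by simp; omega⟩), ?_, rfl⟩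
            rw [glued_adj_iff]
            refine ⟨?_, Or.inl ⟨rfl, bb, rfl⟩⟩
            intro h
            have := congrArg gluedList h
            simp [gluedList] at this
          · refine ⟨Sum.inr ⟨s.val ++ [bb], by simp; omega⟩, ?_, rfl⟩
            rw [glued_adj_iff]
            exact ⟨by simp, Or.inl ⟨bb, rfl⟩⟩
        obtain ⟨c0, hc0, hl0⟩ := hadjc 0
        obtain ⟨c1, hc1, hl1⟩ := hadjc 1
        have hadjp : (gluedTree r 2 2).Adj (Sum.inl (i, s))
            (Sum.inl (i, ⟨s.val.dropLast, hdlt⟩)) := by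
          rw [glued_adj_iff]
          refine ⟨?_, Or.inr ⟨rfl, s.val.getLast hs, (List.dropLast_append_getLast hs).symm⟩⟩
          intro h
          have := congrArg gluedList h
          simp [gluedList] at this
          have hL := congrArg List.length this
          simp at hL
          omega
        have key : ∀ x y : gluedVert r 2 2, gluedList x ≠ gluedList y → x ≠ y :=
          fun x y h hxy => h (congrArg _ hxy)
        have h01 : c0 ≠ c1 := key _ _ (by rw [hl0, hl1]; simp)
        have hp0 : (Sum.inl (i, ⟨s.val.dropLast, hdlt⟩) : gluedVert r 2 2) ≠ c0 := by
          apply key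
          rw [hl0]
          intro h
          have := congrArg List.length h
          simp only [gluedList, List.length_dropLast, List.length_append,
            List.length_singleton] at this
          omega
        have hp1 : (Sum.inl (i, ⟨s.val.dropLast, hdlt⟩) : gluedVert r 2 2) ≠ c1 := by
          apply key
          rw [hl1]
          intro h
          have := congrArg List.length h
          simp only [gluedList, List.length_dropLast, List.length_append,
            List.length_singleton] at this
          omega
        have hsub : ({Sum.inl (i, ⟨s.val.dropLast, hdlt⟩), c0, c1} : Set _) ⊆
            (gluedTree r 2 2).neighborSet (Sum.inl (i, s)) := by
          rintro x (rfl | rfl | rfl)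
          exacts [hadjp, hc0, hc1]
        have hfin : ((gluedTree r 2 2).neighborSet (Sum.inl (i, s))).Finite := by
          by_contra hinf
          have h0 := Set.Infinite.ncard hinf
          rw [h0] at hdeg
          simp at hdeg
        have h3 : ({Sum.inl (i, ⟨s.val.dropLast, hdlt⟩), c0, c1} :
            Set (gluedVert r 2 2)).ncard = 3 := by
          rw [Set.ncard_insert_of_notMem (by simp [hp0, hp1])
            ((Set.finite_singleton _).insert _), Set.ncard_pair h01]
        have hle := Set.ncard_le_ncard hsub hfin
        rw [hdeg, h3] at hle
        omega
    · exact ⟨l, rfl⟩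
end

section
/- For r ≥ 2, the outer mutual-visibility number of the glued binary tree GT(r) equals 2^r, and the set of quasi-leaves is the unique maximum outer mutual-visibility set. -/
open SimpleGraph

/-!
Every vertex of `GT(r)` has an address in the binary prefix tree (a quasi-leaf one of length
`r`), and adjacent vertices have adjacent addresses. So distances in `GT(r)` are at least the
tree distances of the addresses, with equality inside one copy, and a shortest path visits every
address of the tree geodesic and no other; in particular a shortest path from an internal vertex
meets no quasi-leaf before its end, hence stays in its copy. This makes the quasi-leaves an outer
mutual-visibility set, and shows that an outer mutual-visibility set `S` containing an internal
vertex of address `s` contains no other internal vertex of that copy and no quasi-leaf below `s`.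
Thus `S` has at most two internal vertices and misses more quasi-leaves than that: the two below
`s` when one copy meets `S`, at least four below two different addresses, and all of them when
both copies meet `S` in address `s`.
-/

theorem isVisible_symm {V : Type*} {G : SimpleGraph V} {S : Set V} {u v : V}
    (h : isVisible G S u v) : isVisible G S v u := by
  obtain ⟨p, hp, hlen, hS⟩ := h
  refine ⟨p.reverse, hp.reverse, by rw [Walk.length_reverse, hlen, dist_comm],
    fun w hw hwS => ?_⟩
  rw [Walk.support_reverse, List.mem_reverse] at hw
  exact (hS w hw hwS).symm

theorem isVisible_of_isOuterMVSet {V : Type*} {G : SimpleGraph V} {S : Set V}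
    (hS : isOuterMVSet G S) {u : V} (hu : u ∈ S) (v : V) : isVisible G S u v := by
  by_cases hv : v ∈ S
  exacts [hS.1 u hu v hv, hS.2 u hu v hv]

theorem Set.ncard_lt_of_disjoint {α : Type*} [Finite α] {S L E : Set α} (hE : E ⊆ L)
    (hSE : Disjoint S E) (h : (S \ L).ncard < E.ncard) : S.ncard < L.ncard :=
  calc S.ncard ≤ (S \ L ∪ L \ E).ncard := Set.ncard_le_ncard fun w hw => by
        by_cases hwL : w ∈ L
        exacts [.inr ⟨hwL, hSE.notMem_of_mem_left hw⟩, .inl ⟨hw, hwL⟩]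
    _ ≤ (S \ L).ncard + (L \ E).ncard := Set.ncard_union_le _ _
    _ < L.ncard := by
      rw [Set.ncard_sdiff hE]
      have := Set.ncard_le_ncard hE
      omega

namespace List

variable {α : Type*}

def prefixTree (α : Type*) : SimpleGraph (List α) :=
  SimpleGraph.fromRel fun a b => ∃ x, b = a ++ [x]

theorem prefixTree_adj {a b : List α} :
    (prefixTree α).Adj a b ↔ (∃ x, b = a ++ [x]) ∨ ∃ x, a = b ++ [x] := by
  refine ⟨fun h => h.2, fun h => ⟨?_, h⟩⟩
  rintro rfl
  rcases h with ⟨x, h⟩ | ⟨x, h⟩ <;> simpa using congrArg length h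

theorem exists_prefix_length_eq [Nonempty α] {u : List α} {r : ℕ} (h : u.length ≤ r) :
    ∃ l, u <+: l ∧ l.length = r :=
  ⟨u ++ replicate (r - u.length) (Classical.arbitrary α), prefix_append _ _, by simp; omega⟩

theorem exists_not_prefix_append_singleton [Nontrivial α] (t s : List α) :
    ∃ y, ¬ t ++ [y] <+: s := by
  obtain ⟨y, z, hyz⟩ := exists_pair_ne α
  by_contra! h
  have := (prefix_of_prefix_length_le (h y) (h z) (by simp)).eq_of_length (by simp)
  exact hyz (by simpa using this)

variable [DecidableEq α]

def lcp : List α → List α → List α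
  | x :: a, y :: b => if x = y then x :: lcp a b else []
  | _, _ => []

theorem lcp_comm : ∀ a b : List α, lcp a b = lcp b a
  | [], [] | [], _ :: _ | _ :: _, [] => rfl
  | x :: a, y :: b => by
    by_cases h : x = y
    · subst h; simp [lcp, lcp_comm a b]
    · simp [lcp, h, Ne.symm h]

theorem lcp_prefix_left : ∀ a b : List α, lcp a b <+: a
  | [], _ | _ :: _, [] => nil_prefix
  | x :: a, y :: b => by
    unfold lcp
    split_ifs
    · exact (prefix_cons_inj x).2 (lcp_prefix_left a b)
    · exact nil_prefix

theorem lcp_prefix_right (a b : List α) : lcp a b <+: b :=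
  lcp_comm a b ▸ lcp_prefix_left b a

theorem prefix_lcp_iff {a b c : List α} : c <+: lcp a b ↔ c <+: a ∧ c <+: b := by
  refine ⟨fun h => ⟨h.trans (lcp_prefix_left a b), h.trans (lcp_prefix_right a b)⟩, ?_⟩
  induction c generalizing a b with
  | nil => simp
  | cons z c ih =>
    rintro ⟨ha, hb⟩
    cases a with
    | nil => simp at ha
    | cons x a =>
      cases b with
      | nil => simp at hb
      | cons y b =>
        obtain ⟨rfl, ha'⟩ := cons_prefix_cons.1 ha
        obtain ⟨rfl, hb'⟩ := cons_prefix_cons.1 hb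
        simpa [lcp] using ih ⟨ha', hb'⟩

theorem lcp_eq_left_of_prefix {a b : List α} (h : a <+: b) : lcp a b = a :=
  antisymm (lcp_prefix_left a b) (prefix_lcp_iff.2 ⟨prefix_rfl, h⟩)

@[simp] theorem lcp_self (a : List α) : lcp a a = a := lcp_eq_left_of_prefix prefix_rfl

theorem lcp_append_singleton_of_not_prefix {a b : List α} {x : α} (h : ¬ a ++ [x] <+: b) :
    lcp (a ++ [x]) b = lcp a b := by
  refine antisymm ?_ (prefix_lcp_iff.2
    ⟨(lcp_prefix_left a b).trans (prefix_append a [x]), lcp_prefix_right a b⟩)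
  rcases prefix_concat_iff.1 (lcp_prefix_left (a ++ [x]) b) with he | hp
  · exact absurd (he ▸ lcp_prefix_right _ _) h
  · exact prefix_lcp_iff.2 ⟨hp, lcp_prefix_right _ _⟩

def treeDist (a b : List α) : ℕ :=
  (a.length - (lcp a b).length) + (b.length - (lcp a b).length)

@[simp] theorem treeDist_self (a : List α) : treeDist a a = 0 := by simp [treeDist]

theorem treeDist_append_singleton_of_prefix {a c : List α} {x : α} (h : a ++ [x] <+: c) :
    treeDist (a ++ [x]) c + 1 = treeDist a c := by
  have := h.length_le
  simp only [treeDist, lcp_eq_left_of_prefix h,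
    lcp_eq_left_of_prefix ((prefix_append a [x]).trans h)]
  simp at this ⊢
  omega

theorem treeDist_append_singleton_of_not_prefix {a c : List α} {x : α} (h : ¬ a ++ [x] <+: c) :
    treeDist (a ++ [x]) c = treeDist a c + 1 := by
  have := (lcp_prefix_left a c).length_le
  simp only [treeDist, lcp_append_singleton_of_not_prefix h, length_append, length_singleton]
  omega

theorem treeDist_le_of_adj {a b : List α} (h : (prefixTree α).Adj a b) (c : List α) :
    treeDist a c ≤ treeDist b c + 1 := by
  rcases prefixTree_adj.1 h with ⟨x, rfl⟩ | ⟨x, rfl⟩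
  · by_cases hc : a ++ [x] <+: c
    · have := treeDist_append_singleton_of_prefix hc; omega
    · have := treeDist_append_singleton_of_not_prefix hc; omega
  · by_cases hc : b ++ [x] <+: c
    · have := treeDist_append_singleton_of_prefix hc; omega
    · have := treeDist_append_singleton_of_not_prefix hc; omega

def geodesic (a b : List α) : Set (List α) := {c | lcp a b <+: c ∧ (c <+: a ∨ c <+: b)}

theorem left_mem_geodesic (a b : List α) : a ∈ geodesic a b :=
  ⟨lcp_prefix_left a b, .inl prefix_rfl⟩

theorem mem_geodesic_of_prefix {a b c : List α} (hb : c <+: b) (ha : ¬ c <+: a) :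
    c ∈ geodesic a b :=
  ⟨(prefix_or_prefix_of_prefix (lcp_prefix_right a b) hb).resolve_right
    fun h => ha (h.trans (lcp_prefix_left a b)), .inr hb⟩

@[simp] theorem geodesic_self (a : List α) : geodesic a a = {a} := by
  ext c
  simp only [geodesic, lcp_self, or_self, Set.mem_ofPred_eq, Set.mem_singleton_iff]
  exact ⟨fun h => antisymm h.2 h.1, fun h => h ▸ ⟨prefix_rfl, prefix_rfl⟩⟩

theorem geodesic_append_singleton_of_prefix {a d : List α} {x : α} (h : a ++ [x] <+: d) :
    geodesic (a ++ [x]) d = geodesic a d \ {a} := by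
  have had := (prefix_append a [x]).trans h
  ext c
  simp only [geodesic, lcp_eq_left_of_prefix h, lcp_eq_left_of_prefix had, Set.mem_sdiff,
    Set.mem_ofPred_eq, Set.mem_singleton_iff]
  constructor
  · rintro ⟨hc, hcd⟩
    refine ⟨⟨(prefix_append a [x]).trans hc, .inr ?_⟩, fun hca => ?_⟩
    · exact hcd.elim (fun h' => antisymm h' hc ▸ h) id
    · simpa [hca] using hc.length_le
  · rintro ⟨⟨hac, hcd⟩, hca⟩
    have hcd : c <+: d := hcd.resolve_left fun h' => hca (antisymm h' hac)
    have hlen : a.length < c.length :=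
      lt_of_le_of_ne hac.length_le fun h' => hca (hac.eq_of_length h').symm
    exact ⟨prefix_of_prefix_length_le h hcd (by simpa using hlen), .inr hcd⟩

theorem geodesic_append_singleton_of_not_prefix {a d : List α} {x : α}
    (h : ¬ a ++ [x] <+: d) : geodesic (a ++ [x]) d = insert (a ++ [x]) (geodesic a d) := by
  have hm := (lcp_prefix_left a d).trans (prefix_append a [x])
  ext c
  simp only [geodesic, lcp_append_singleton_of_not_prefix h, prefix_concat_iff,
    Set.mem_insert_iff, Set.mem_ofPred_eq]
  constructor
  · rintro ⟨hmc, (rfl | hca) | hcd⟩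
    exacts [.inl rfl, .inr ⟨hmc, .inl hca⟩, .inr ⟨hmc, .inr hcd⟩]
  · rintro (rfl | ⟨hmc, hca | hcd⟩)
    exacts [⟨hm, .inl (.inl rfl)⟩, ⟨hmc, .inl (.inr hca)⟩, ⟨hmc, .inr hcd⟩]

theorem mem_geodesic_of_adj {a b c d : List α} (h : (prefixTree α).Adj a b)
    (hc : c ∈ geodesic a d) (hca : c ≠ a) : c ∈ geodesic b d := by
  rcases prefixTree_adj.1 h with ⟨x, rfl⟩ | ⟨x, rfl⟩
  · by_cases hd : a ++ [x] <+: d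
    · rw [geodesic_append_singleton_of_prefix hd]; exact ⟨hc, hca⟩
    · rw [geodesic_append_singleton_of_not_prefix hd]; exact .inr hc
  · by_cases hd : b ++ [x] <+: d
    · rw [geodesic_append_singleton_of_prefix hd] at hc; exact hc.1
    · rw [geodesic_append_singleton_of_not_prefix hd] at hc; exact hc.resolve_left hca

theorem geodesic_subset_of_adj {a b d : List α} (h : (prefixTree α).Adj a b)
    (hlt : treeDist b d < treeDist a d) : geodesic b d ⊆ geodesic a d := by
  rcases prefixTree_adj.1 h with ⟨x, rfl⟩ | ⟨x, rfl⟩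
  · by_cases hd : a ++ [x] <+: d
    · rw [geodesic_append_singleton_of_prefix hd]; exact Set.sdiff_subset
    · have := treeDist_append_singleton_of_not_prefix hd; omega
  · by_cases hd : b ++ [x] <+: d
    · have := treeDist_append_singleton_of_prefix hd; omega
    · rw [geodesic_append_singleton_of_not_prefix hd]; exact Set.subset_insert _ _

theorem exists_length_eq_mem_geodesic [Nontrivial α] (s : List α) {t : List α} {r : ℕ}
    (ht : t.length < r) : ∃ l, l.length = r ∧ t ∈ geodesic s l := by
  obtain ⟨y, hy⟩ := exists_not_prefix_append_singleton t s
  obtain ⟨l, hl, hlr⟩ := exists_prefix_length_eq (u := t ++ [y]) (by simp; omega)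
  have htl : t <+: l := (prefix_append t [y]).trans hl
  refine ⟨l, hlr, prefix_of_prefix_length_le (lcp_prefix_right s l) htl ?_, .inr htl⟩
  by_contra! hlt
  exact hy ((prefix_of_prefix_length_le hl (lcp_prefix_right s l) (by simp; omega)).trans
    (lcp_prefix_left s l))

theorem treeDist_le_length : ∀ {a b : List α} (p : (prefixTree α).Walk a b),
    treeDist a b ≤ p.length
  | _, _, .nil => by simp
  | _, b, .cons h q => by
    have := treeDist_le_of_adj h b
    have := treeDist_le_length q
    rw [Walk.length_cons]
    omega

theorem mem_support_of_mem_geodesic : ∀ {a b c : List α} (p : (prefixTree α).Walk a b),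
    c ∈ geodesic a b → c ∈ p.support
  | _, _, _, .nil, hc => by simpa using hc
  | a, _, c, .cons h q, hc => by
    rw [Walk.support_cons, mem_cons]
    by_cases hca : c = a
    · exact .inl hca
    · exact .inr (mem_support_of_mem_geodesic q (mem_geodesic_of_adj h hc hca))

theorem mem_geodesic_of_mem_support : ∀ {a b c : List α} (p : (prefixTree α).Walk a b),
    p.length = treeDist a b → c ∈ p.support → c ∈ geodesic a b
  | _, _, _, .nil, _, hc => by simpa using hc
  | a, b, c, .cons h q, hp, hc => by
    have hab := treeDist_le_of_adj h b
    have hq := treeDist_le_length q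
    rw [Walk.length_cons] at hp
    rw [Walk.support_cons, mem_cons] at hc
    rcases hc with rfl | hc
    · exact left_mem_geodesic _ _
    · exact geodesic_subset_of_adj h (by omega) (mem_geodesic_of_mem_support q (by omega) hc)

end List

namespace GluedTree

open List

variable {r n t : ℕ}

def address : gluedVert r n t → List (Fin t)
  | .inl (_, s) => s.1
  | .inr l => l.1

@[simp] theorem address_inl (i : Fin n) (s : {l : List (Fin t) // l.length < r}) :
    address (.inl (i, s) : gluedVert r n t) = s.1 := rfl

@[simp] theorem address_inr (l : {l : List (Fin t) // l.length = r}) :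
    address (.inr l : gluedVert r n t) = l.1 := rfl

@[simp] theorem inl_notMem_quasiLeaves (x : Fin n × {l : List (Fin t) // l.length < r}) :
    Sum.inl x ∉ quasiLeaves r n t := by
  simp [quasiLeaves]

@[simp] theorem inr_mem_quasiLeaves (l : {l : List (Fin t) // l.length = r}) :
    Sum.inr l ∈ quasiLeaves r n t := ⟨l, rfl⟩

theorem address_length_le : ∀ u : gluedVert r n t, (address u).length ≤ r
  | .inl (_, s) => s.2.le
  | .inr l => l.2.le

theorem mem_quasiLeaves_iff_address_length {u : gluedVert r n t} :
    u ∈ quasiLeaves r n t ↔ (address u).length = r := by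
  rcases u with ⟨i, s⟩ | l
  · simpa using s.2.ne
  · simpa using l.2

theorem address_inl_ne (i : Fin n) (s : {l : List (Fin t) // l.length < r}) {w : gluedVert r n t}
    (hw : w ∈ quasiLeaves r n t) : address (.inl (i, s)) ≠ address w := by
  rw [address_inl]
  exact fun h =>
    (s.2.trans_eq (mem_quasiLeaves_iff_address_length.1 hw).symm).ne (congrArg length h)

theorem exists_mem_copySet [NeZero n] : ∀ v : gluedVert r n t, ∃ i, v ∈ copySet r n t i
  | .inl (i, s) => ⟨i, .inl ⟨s, rfl⟩⟩
  | .inr l => ⟨0, .inr ⟨l, rfl⟩⟩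

theorem address_injOn_copySet (i : Fin n) : Set.InjOn address (copySet r n t i) := by
  rintro _ (⟨s, rfl⟩ | ⟨l, rfl⟩) _ (⟨s', rfl⟩ | ⟨l', rfl⟩) h
  all_goals simp only [address_inl, address_inr] at h
  · rw [Subtype.ext h]
  · have := congrArg length h; have := s.2; have := l'.2; omega
  · have := congrArg length h; have := s'.2; have := l.2; omega
  · rw [Subtype.ext h]

theorem eq_of_mem_quasiLeaves_of_prefix {i : Fin n} {w v : gluedVert r n t}
    (hw : w ∈ quasiLeaves r n t) (hv : v ∈ copySet r n t i) (h : address w <+: address v) :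
    w = v :=
  address_injOn_copySet i (.inr hw) hv <| h.eq_of_length <| le_antisymm h.length_le <| by
    rw [mem_quasiLeaves_iff_address_length.1 hw]; exact address_length_le v

theorem exists_address_eq_append_of_gluedAdj {u v : gluedVert r n t} (h : gluedAdj r n t u v) :
    ∃ x, address v = address u ++ [x] := by
  rcases u with ⟨i, s⟩ | l <;> rcases v with ⟨j, s'⟩ | l' <;> simp only [gluedAdj] at h
  · exact h.2
  · exact h

def addressHom : gluedTree r n t →g prefixTree (Fin t) where
  toFun := address
  map_rel' h := prefixTree_adj.2 <| h.2.imp exists_address_eq_append_of_gluedAdj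
    exists_address_eq_append_of_gluedAdj

theorem treeDist_address_le_length {u v : gluedVert r n t} (p : (gluedTree r n t).Walk u v) :
    treeDist (address u) (address v) ≤ p.length :=
  (List.treeDist_le_length (p.map addressHom)).trans_eq (p.length_map addressHom)

theorem adj_of_address_eq_append {i : Fin n} {v : gluedVert r n t} (hv : v ∈ copySet r n t i)
    {l : List (Fin t)} (hl : l.length < r) {x : Fin t} (h : address v = l ++ [x]) :
    (gluedTree r n t).Adj (.inl (i, ⟨l, hl⟩)) v := by
  refine ⟨fun he => by simp [← he] at h, .inl ?_⟩
  rcases hv with ⟨s, rfl⟩ | ⟨l', rfl⟩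
  · exact ⟨rfl, x, h⟩
  · exact ⟨x, h⟩

theorem mem_copySet_of_adj {i : Fin n} {u w : gluedVert r n t} (hu : u ∈ copySet r n t i)
    (huL : u ∉ quasiLeaves r n t) (h : (gluedTree r n t).Adj u w) : w ∈ copySet r n t i := by
  obtain ⟨s, rfl⟩ := hu.resolve_right huL
  rcases w with ⟨j, s'⟩ | l
  · obtain rfl : j = i := by
      rcases h.2 with h | h <;> simp only [gluedAdj] at h
      exacts [h.1.symm, h.1]
    exact .inl ⟨s', rfl⟩
  · exact .inr ⟨l, rfl⟩

theorem exists_walk_of_address_eq_append (i : Fin n) {m : List (Fin t)} (hm : m.length < r)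
    (e : List (Fin t)) {v : gluedVert r n t} (hv : v ∈ copySet r n t i)
    (he : address v = m ++ e) :
    ∃ p : (gluedTree r n t).Walk (.inl (i, ⟨m, hm⟩)) v,
      p.length = e.length ∧ ∀ w ∈ p.support, address w <+: address v := by
  induction e using List.reverseRecOn generalizing v with
  | nil =>
    have : Sum.inl (i, ⟨m, hm⟩) = v :=
      address_injOn_copySet i (.inl ⟨_, rfl⟩) hv (by simpa using he.symm)
    subst this
    exact ⟨.nil, rfl, by simp⟩
  | append_singleton e x ih =>
    have hlt : (m ++ e).length < r := by
      have := address_length_le v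
      rw [he] at this
      simp at this ⊢
      omega
    obtain ⟨p, hp, hsupp⟩ := ih (v := .inl (i, ⟨m ++ e, hlt⟩)) (.inl ⟨_, rfl⟩) rfl
    refine ⟨p.concat (adj_of_address_eq_append hv hlt (by rw [he, append_assoc])),
      by simp [hp], ?_⟩
    intro w hw
    rw [Walk.support_concat, mem_append, mem_singleton] at hw
    rcases hw with hw | rfl
    · exact (hsupp w hw).trans (by simp [he, ← append_assoc])
    · exact prefix_rfl

theorem exists_walk_of_mem_copySet {i : Fin n} {u v : gluedVert r n t}
    (hu : u ∈ copySet r n t i) (hv : v ∈ copySet r n t i) :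
    ∃ p : (gluedTree r n t).Walk u v, p.length = treeDist (address u) (address v) ∧
      ∀ w ∈ p.support, address w <+: address u ∨ address w <+: address v := by
  obtain ⟨eu, heu⟩ := lcp_prefix_left (address u) (address v)
  obtain ⟨ev, hev⟩ := lcp_prefix_right (address u) (address v)
  by_cases hm : (lcp (address u) (address v)).length < r
  · obtain ⟨p, hp, hps⟩ := exists_walk_of_address_eq_append i hm eu hu heu.symm
    obtain ⟨q, hq, hqs⟩ := exists_walk_of_address_eq_append i hm ev hv hev.symm
    refine ⟨p.reverse.append q, ?_, fun w hw => ?_⟩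
    · have := congrArg length heu
      have := congrArg length hev
      simp only [length_append] at *
      rw [Walk.length_append, Walk.length_reverse, hp, hq, treeDist]
      omega
    · rw [Walk.mem_support_append_iff, Walk.support_reverse, mem_reverse] at hw
      exact hw.imp (hps w) (hqs w)
  · have hu' := address_length_le u
    have hv' := address_length_le v
    have h₁ := lcp_prefix_left (address u) (address v)
    have h₂ := lcp_prefix_right (address u) (address v)
    obtain rfl := address_injOn_copySet i hu hv <|
      (h₁.eq_of_length (by have := h₁.length_le; omega)).symm.trans
        (h₂.eq_of_length (by have := h₂.length_le; omega))
    exact ⟨.nil, by simp, by simp⟩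

theorem dist_eq_treeDist {i : Fin n} {u v : gluedVert r n t} (hu : u ∈ copySet r n t i)
    (hv : v ∈ copySet r n t i) :
    (gluedTree r n t).dist u v = treeDist (address u) (address v) := by
  obtain ⟨p, hp, -⟩ := exists_walk_of_mem_copySet hu hv
  obtain ⟨q, hq⟩ := p.reachable.exists_walk_length_eq_dist
  exact le_antisymm (hp ▸ dist_le p) (hq ▸ treeDist_address_le_length q)

theorem isVisible_quasiLeaves {i : Fin n} {u v : gluedVert r n t} (hu : u ∈ quasiLeaves r n t)
    (hv : v ∈ copySet r n t i) : isVisible (gluedTree r n t) (quasiLeaves r n t) u v := by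
  obtain ⟨p, hp, hps⟩ := exists_walk_of_mem_copySet (.inr hu) hv
  have hd := dist_eq_treeDist (.inr hu) hv
  refine ⟨p.bypass, p.bypass_isPath,
    le_antisymm (p.length_bypass_le_length.trans (hp.trans hd.symm).le) (dist_le _),
    fun w hw hwL => ?_⟩
  exact (hps w (p.support_bypass_subset_support hw)).imp
    (eq_of_mem_quasiLeaves_of_prefix (i := i) hwL (.inr hu))
    (eq_of_mem_quasiLeaves_of_prefix hwL hv)

theorem isOuterMVSet_quasiLeaves [NeZero n] :
    isOuterMVSet (gluedTree r n t) (quasiLeaves r n t) := by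
  have h (u) (hu : u ∈ quasiLeaves r n t) (v) : isVisible _ _ u v :=
    (exists_mem_copySet v).elim fun _ hv => isVisible_quasiLeaves hu hv
  exact ⟨fun u hu v _ => h u hu v, fun u hu v _ => h u hu v⟩

theorem support_subset_copySet {i : Fin n} {u v : gluedVert r n t}
    (p : (gluedTree r n t).Walk u v) (hp : p.IsPath) (hu : u ∈ copySet r n t i)
    (hL : ∀ w ∈ p.support, w ∈ quasiLeaves r n t → w = v) :
    ∀ w ∈ p.support, w ∈ copySet r n t i := by
  induction p with
  | nil => simpa using hu
  | @cons u b v h q ih =>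
    have huL : u ∉ quasiLeaves r n t := fun huL => by
      obtain rfl := hL u (Walk.start_mem_support _) huL
      exact (Walk.cons_isPath_iff h q).1 hp |>.2 q.end_mem_support
    intro w hw
    rw [Walk.support_cons, mem_cons] at hw
    rcases hw with rfl | hw
    · exact hu
    · exact ih hp.of_cons (mem_copySet_of_adj hu huL h)
        (fun w hw => hL w (Walk.support_cons h q ▸ mem_cons_of_mem u hw)) w hw

theorem support_subset_copySet_of_length_eq {i : Fin n} {u v : gluedVert r n t}
    (hu : u ∈ copySet r n t i) (huL : u ∉ quasiLeaves r n t) (hv : v ∈ copySet r n t i)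
    (p : (gluedTree r n t).Walk u v) (hp : p.IsPath)
    (hlen : p.length = treeDist (address u) (address v)) :
    ∀ w ∈ p.support, w ∈ copySet r n t i := by
  refine support_subset_copySet p hp hu fun w hw hwL => ?_
  have hgeo : address w ∈ geodesic (address u) (address v) :=
    mem_geodesic_of_mem_support (p.map addressHom) ((p.length_map addressHom).trans hlen)
      (p.support_map addressHom ▸ mem_map_of_mem hw)
  refine eq_of_mem_quasiLeaves_of_prefix hwL hv (hgeo.2.resolve_left fun h => huL ?_)
  rw [mem_quasiLeaves_iff_address_length] at hwL ⊢
  exact le_antisymm (address_length_le u) (hwL.symm.le.trans h.length_le)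

theorem exists_address_eq_notMem_of_isVisible {S : Set (gluedVert r n t)} {u v : gluedVert r n t}
    {c : List (Fin t)} (hvis : isVisible (gluedTree r n t) S u v)
    (hd : (gluedTree r n t).dist u v = treeDist (address u) (address v))
    (hc : c ∈ geodesic (address u) (address v)) (hcu : c ≠ address u) (hcv : c ≠ address v) :
    ∃ p : (gluedTree r n t).Walk u v, p.IsPath ∧ p.length = treeDist (address u) (address v) ∧
      ∃ w ∈ p.support, address w = c ∧ w ∉ S := by
  obtain ⟨p, hp, hlen, hS⟩ := hvis
  obtain ⟨w, hw, rfl⟩ : ∃ w ∈ p.support, address w = c :=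
    List.mem_map.1 (p.support_map addressHom ▸ mem_support_of_mem_geodesic (p.map addressHom) hc)
  refine ⟨p, hp, hlen.trans hd, w, hw, rfl, fun hwS => ?_⟩
  rcases hS w hw hwS with rfl | rfl
  exacts [hcu rfl, hcv rfl]

theorem not_isVisible_of_mem_copySet {i : Fin n} {S : Set (gluedVert r n t)}
    {u v x : gluedVert r n t} (hu : u ∈ copySet r n t i) (huL : u ∉ quasiLeaves r n t)
    (hv : v ∈ copySet r n t i) (hx : x ∈ S) (hxi : x ∈ copySet r n t i)
    (hgeo : address x ∈ geodesic (address u) (address v)) (hxu : address x ≠ address u)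
    (hxv : address x ≠ address v) : ¬ isVisible (gluedTree r n t) S u v := fun hvis => by
  obtain ⟨p, hp, hlen, w, hw, hwx, hwS⟩ :=
    exists_address_eq_notMem_of_isVisible hvis (dist_eq_treeDist hu hv) hgeo hxu hxv
  exact hwS (address_injOn_copySet i (support_subset_copySet_of_length_eq hu huL hv p hp hlen w hw)
    hxi hwx ▸ hx)

def leavesBelow (r n t : ℕ) (s : List (Fin t)) : Set (gluedVert r n t) :=
  {w | w ∈ quasiLeaves r n t ∧ s <+: address w}

section OuterMVSet

variable [Nontrivial (Fin t)] {S : Set (gluedVert r n t)}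

theorem subsingleton_inl_mem (hS : isOuterMVSet (gluedTree r n t) S) (i : Fin n) :
    {s | Sum.inl (i, s) ∈ S}.Subsingleton := by
  intro s hs s' hs'
  by_contra hne
  obtain ⟨l, hl, hgeo⟩ := exists_length_eq_mem_geodesic s.1 s'.2
  exact not_isVisible_of_mem_copySet (.inl ⟨s, rfl⟩) (inl_notMem_quasiLeaves _)
    (.inr (inr_mem_quasiLeaves ⟨l, hl⟩)) hs' (.inl ⟨s', rfl⟩) hgeo
    (fun h => hne (Subtype.ext h).symm) (address_inl_ne _ _ (inr_mem_quasiLeaves _))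
    (isVisible_of_isOuterMVSet hS hs _)

theorem disjoint_leavesBelow (hr : 2 ≤ r) (hS : isOuterMVSet (gluedTree r n t) S) {i : Fin n}
    {s : {l : List (Fin t) // l.length < r}} (hx : Sum.inl (i, s) ∈ S) :
    Disjoint S (leavesBelow r n t s.1) := by
  rw [Set.disjoint_right]
  rintro w ⟨hwL, hsw⟩ hwS
  -- `[y]` branches off the root away from `w`, so its geodesic to `w` runs through `s`
  obtain ⟨y, hy⟩ := exists_not_prefix_append_singleton [] (address w)
  have hlcp : lcp [y] (address w) = [] := by
    simpa [lcp] using lcp_append_singleton_of_not_prefix hy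
  refine not_isVisible_of_mem_copySet (u := .inl (i, ⟨[y], by simp; omega⟩)) (.inl ⟨_, rfl⟩)
    (inl_notMem_quasiLeaves _) (.inr hwL) hx (.inl ⟨s, rfl⟩) ⟨hlcp ▸ nil_prefix, .inr hsw⟩
    (fun h => hy (by simp only [address_inl] at h; simpa [h] using hsw)) (address_inl_ne _ _ hwL)
    (isVisible_symm (isVisible_of_isOuterMVSet hS hwS _))

theorem disjoint_quasiLeaves_of_forall_inl_mem [NeZero n] (hr : 2 ≤ r)
    (hS : isOuterMVSet (gluedTree r n t) S) (s : {l : List (Fin t) // l.length < r})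
    (hall : ∀ k, Sum.inl (k, s) ∈ S) : Disjoint S (quasiLeaves r n t) := by
  rw [Set.disjoint_left]
  intro u huS huL
  have hsu : ¬ s.1 <+: address u := fun h =>
    Set.disjoint_left.1 (disjoint_leavesBelow hr hS (hall 0)) huS ⟨huL, h⟩
  -- a shortest path from `u` to a quasi-leaf below `s` passes address `s`, in either copy
  obtain ⟨l, hsl, hl⟩ := exists_prefix_length_eq s.2.le
  obtain ⟨-, -, -, w, -, hw, hwS⟩ := exists_address_eq_notMem_of_isVisible
    (isVisible_of_isOuterMVSet hS huS (.inr ⟨l, hl⟩))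
    (dist_eq_treeDist (i := 0) (.inr huL) (.inr (inr_mem_quasiLeaves _)))
    (mem_geodesic_of_prefix hsl hsu) (fun h => hsu (h ▸ prefix_rfl))
    (address_inl_ne 0 s (inr_mem_quasiLeaves ⟨l, hl⟩))
  rcases w with ⟨k, s'⟩ | w
  · obtain rfl : s' = s := Subtype.ext hw
    exact hwS (hall k)
  · exact address_inl_ne 0 s (inr_mem_quasiLeaves w) hw.symm

end OuterMVSet

instance : Finite {l : List (Fin t) // l.length < r} := (finite_length_lt (Fin t) r).to_subtype

instance : Finite {l : List (Fin t) // l.length = r} := (finite_length_eq (Fin t) r).to_subtype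

theorem ncard_leavesBelow {s : List (Fin t)} (hs : s.length ≤ r) :
    (leavesBelow r n t s).ncard = t ^ (r - s.length) := by
  have hrange : leavesBelow r n t s = Set.range fun e : List.Vector (Fin t) (r - s.length) =>
      (Sum.inr ⟨s ++ e.1, by simp [e.2]; omega⟩ : gluedVert r n t) := by
    ext w
    constructor
    · rintro ⟨⟨l, rfl⟩, e, he⟩
      have := congrArg length he
      have := l.2
      refine ⟨⟨e, ?_⟩, by simp [he]⟩
      simp at *
      omega
    · rintro ⟨e, rfl⟩
      exact ⟨inr_mem_quasiLeaves _, prefix_append _ _⟩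
  rw [hrange, ← Nat.card_coe_set_eq, Nat.card_range_of_injective, Nat.card_eq_fintype_card,
    card_vector, Fintype.card_fin]
  intro e e' h
  exact Subtype.ext (by simpa using h)

theorem ncard_quasiLeaves : (quasiLeaves r n t).ncard = t ^ r := by
  have : quasiLeaves r n t = leavesBelow r n t [] := by ext w; simp [leavesBelow]
  simpa [this] using ncard_leavesBelow (n := n) (t := t) (s := []) (Nat.zero_le r)

theorem two_pow_le_ncard_leavesBelow {s : List (Fin 2)} {k : ℕ} (h : s.length + k ≤ r) :
    2 ^ k ≤ (leavesBelow r n 2 s).ncard := by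
  rw [ncard_leavesBelow (by omega)]
  exact Nat.pow_le_pow_right two_pos (by omega)

theorem four_le_ncard_leavesBelow_union {s s' : List (Fin 2)} (hs : s.length < r)
    (hs' : s'.length < r) (hne : s ≠ s') :
    4 ≤ (leavesBelow r n 2 s ∪ leavesBelow r n 2 s').ncard := by
  by_cases hd : Disjoint (leavesBelow r n 2 s) (leavesBelow r n 2 s')
  · rw [Set.ncard_union_eq hd]
    have := two_pow_le_ncard_leavesBelow (n := n) (k := 1) hs
    have := two_pow_le_ncard_leavesBelow (n := n) (k := 1) hs'
    omega
  · obtain ⟨w, hw, hw'⟩ := Set.not_disjoint_iff.1 hd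
    have key {a b : List (Fin 2)} (hab : a <+: b) (hne : a ≠ b) (hb : b.length < r) :
        4 ≤ (leavesBelow r n 2 a).ncard := by
      have : a.length < b.length := lt_of_le_of_ne hab.length_le fun h => hne (hab.eq_of_length h)
      exact two_pow_le_ncard_leavesBelow (k := 2) (by omega)
    rcases prefix_or_prefix_of_prefix hw.2 hw'.2 with h | h
    · exact (key h hne hs').trans (Set.ncard_le_ncard Set.subset_union_left)
    · exact (key h hne.symm hs).trans (Set.ncard_le_ncard Set.subset_union_right)

theorem ncard_lt_of_inl_mem_of_inl_mem (hr : 2 ≤ r) {S : Set (gluedVert r 2 2)}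
    (hS : isOuterMVSet (gluedTree r 2 2) S) {i j : Fin 2} (hij : i ≠ j)
    {s s' : {l : List (Fin 2) // l.length < r}} (hx : Sum.inl (i, s) ∈ S)
    (hy : Sum.inl (j, s') ∈ S) : S.ncard < (quasiLeaves r 2 2).ncard := by
  have hcopy (k : Fin 2) : k = i ∨ k = j := by omega
  have hint : (S \ quasiLeaves r 2 2).ncard ≤ 2 := by
    refine (Set.ncard_le_ncard (t := {Sum.inl (i, s), Sum.inl (j, s')}) ?_).trans
      ((Set.ncard_insert_le _ _).trans (by simp))
    rintro (⟨k, c⟩ | l) ⟨hw, hwL⟩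
    · rcases hcopy k with rfl | rfl
      · exact .inl (by rw [subsingleton_inl_mem hS k hw hx])
      · exact .inr (by rw [subsingleton_inl_mem hS k hw hy]; rfl)
    · exact absurd (inr_mem_quasiLeaves l) hwL
  by_cases hss : s = s'
  · subst hss
    refine Set.ncard_lt_of_disjoint subset_rfl
      (disjoint_quasiLeaves_of_forall_inl_mem hr hS s fun k => ?_) ?_
    · rcases hcopy k with rfl | rfl
      exacts [hx, hy]
    · rw [ncard_quasiLeaves]
      have : 2 ^ 2 ≤ 2 ^ r := Nat.pow_le_pow_right two_pos hr
      omega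
  · refine Set.ncard_lt_of_disjoint (Set.union_subset (fun w hw => hw.1) (fun w hw => hw.1))
      (Set.disjoint_union_right.2
        ⟨disjoint_leavesBelow hr hS hx, disjoint_leavesBelow hr hS hy⟩) ?_
    have := four_le_ncard_leavesBelow_union (n := 2) s.2 s'.2 fun h => hss (Subtype.ext h)
    omega

theorem ncard_lt_of_not_subset_quasiLeaves (hr : 2 ≤ r) {S : Set (gluedVert r 2 2)}
    (hS : isOuterMVSet (gluedTree r 2 2) S) (hSL : ¬ S ⊆ quasiLeaves r 2 2) :
    S.ncard < (quasiLeaves r 2 2).ncard := by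
  obtain ⟨⟨i, s⟩ | l, hx, hxL⟩ := Set.not_subset.1 hSL
  swap
  · exact absurd (inr_mem_quasiLeaves l) hxL
  by_cases hy : ∃ j s', j ≠ i ∧ Sum.inl (j, s') ∈ S
  · obtain ⟨j, s', hji, hy⟩ := hy
    exact ncard_lt_of_inl_mem_of_inl_mem hr hS hji.symm hx hy
  have hint : S \ quasiLeaves r 2 2 ⊆ {Sum.inl (i, s)} := by
    rintro (⟨k, c⟩ | l) ⟨hw, hwL⟩
    · obtain rfl : k = i := by_contra fun hk => hy ⟨k, c, hk, hw⟩
      rw [subsingleton_inl_mem hS k hw hx]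
      rfl
    · exact absurd (inr_mem_quasiLeaves l) hwL
  refine Set.ncard_lt_of_disjoint (fun w hw => hw.1) (disjoint_leavesBelow hr hS hx) ?_
  calc (S \ _).ncard ≤ 1 := (Set.ncard_le_ncard hint).trans (Set.ncard_singleton _).le
    _ < 2 ^ 1 := by norm_num
    _ ≤ _ := two_pow_le_ncard_leavesBelow (by have := s.2; omega)

end GluedTree

theorem stmt7 (r : ℕ) (hr : 2 ≤ r) :
    IsGreatest {k : ℕ | ∃ S : Set (gluedVert r 2 2),
      isOuterMVSet (gluedTree r 2 2) S ∧ S.ncard = k} (2 ^ r) ∧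
    ∀ S : Set (gluedVert r 2 2),
      isOuterMVSet (gluedTree r 2 2) S → S.ncard = 2 ^ r → S = quasiLeaves r 2 2 := by
  rw [← GluedTree.ncard_quasiLeaves (n := 2)]
  refine ⟨⟨⟨_, GluedTree.isOuterMVSet_quasiLeaves, rfl⟩, ?_⟩, fun S hS hcard => ?_⟩
  · rintro k ⟨S, hS, rfl⟩
    by_cases hSL : S ⊆ quasiLeaves r 2 2
    · exact Set.ncard_le_ncard hSL
    · exact (GluedTree.ncard_lt_of_not_subset_quasiLeaves hr hS hSL).le
  · have hSL : S ⊆ quasiLeaves r 2 2 := by_contra fun h =>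
      (GluedTree.ncard_lt_of_not_subset_quasiLeaves hr hS h).ne hcard
    exact Set.eq_of_subset_of_ncard_le hSL hcard.ge
end

section
/- For r ≥ 2, the number of maximum total mutual-visibility sets of GT(r) equals 2^{2^{r−1}}; more precisely, the μ_t-sets are exactly the sets consisting of exactly one quasi-leaf from each of the 2^{r−1} pairs of twin quasi-leaves. -/
open SimpleGraph

/-!
Write `r = k + 1`, so that the quasi-leaves of `GT(r)` are the lists `p ++ [c]` with `p` of
length `k`; the twins `p ++ [0]` and `p ++ [1]` have the two copies' vertices `p` as their common
neighbours. If all common neighbours of two vertices at distance two lie in `S`, these vertices are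
not `S`-visible. Every internal vertex is the only common neighbour of two such vertices, and the
two copies of the vertex `p` have only the twins as common neighbours, so a total mutual-visibility
set contains no internal vertex and at most one quasi-leaf of each twin pair. Conversely, choosing
one quasi-leaf per pair gives a total mutual-visibility set: a shortest path may trade each chosen
quasi-leaf for its twin. Hence the maximum sets are exactly the `2 ^ 2 ^ k` such choices.
-/

section General

variable {V : Type*} {G : SimpleGraph V} {S : Set V}

theorem isTotalMVSet.exists_adj_adj_not_mem (hS : isTotalMVSet G S) {u v z : V} (huv : u ≠ v)
    (hnadj : ¬G.Adj u v) (huz : G.Adj u z) (hzv : G.Adj z v) :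
    ∃ w, G.Adj u w ∧ G.Adj w v ∧ w ∉ S := by
  obtain ⟨p, -, hlen, hfree⟩ := hS u v
  have hdist : G.dist u v ≤ 2 := by
    simpa using dist_le (.cons huz (.cons hzv .nil))
  match p, hlen with
  | .nil, _ => exact absurd rfl huv
  | .cons h .nil, _ => exact absurd h hnadj
  | .cons (v := w) h₁ (.cons h₂ .nil), _ =>
    refine ⟨w, h₁, h₂, fun hw => ?_⟩
    rcases hfree w (by simp) hw with rfl | rfl
    · exact G.loopless.irrefl _ h₁
    · exact G.loopless.irrefl _ h₂
  | .cons _ (.cons _ (.cons _ _)), hlen => simp at hlen; omega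

theorem isTotalMVSet.not_mem_of_forall_adj_adj_eq (hS : isTotalMVSet G S) {u v x : V}
    (huv : u ≠ v) (hnadj : ¬G.Adj u v) (hux : G.Adj u x) (hxv : G.Adj x v)
    (huniq : ∀ w, G.Adj u w → G.Adj w v → w = x) : x ∉ S := fun hx => by
  obtain ⟨w, huw, hwv, hw⟩ := hS.exists_adj_adj_not_mem huv hnadj hux hxv
  exact hw (huniq w huw hwv ▸ hx)

/-- Replacing the vertices of `S` other than the endpoints by their twins outside `S` is a graph
homomorphism because `S` is independent; it maps a shortest path to one avoiding `S`. -/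
theorem isTotalMVSet_of_isIndepSet (hG : G.Preconnected) (hind : G.IsIndepSet S)
    (htwin : ∀ y ∈ S, ∃ y' ∉ S, G.neighborSet y ⊆ G.neighborSet y') :
    isTotalMVSet G S := by
  classical
  choose! t htS hadj using htwin
  intro u v
  obtain ⟨p, hp⟩ := (hG u v).exists_walk_length_eq_dist
  let φ : G →g G :=
    { toFun := fun y => if y ∈ S ∧ y ≠ u ∧ y ≠ v then t y else y
      map_rel' := by
        intro a b hab
        by_cases ha : a ∈ S ∧ a ≠ u ∧ a ≠ v <;>
          by_cases hb : b ∈ S ∧ b ≠ u ∧ b ≠ v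
        · exact absurd hab (hind ha.1 hb.1 hab.ne)
        · simpa [ha, hb] using hadj a ha.1 hab
        · simpa [ha, hb] using (hadj b hb.1 hab.symm).symm
        · simpa [ha, hb] using hab }
  have hu : φ u = u := by simp [φ]
  have hv : φ v = v := by simp [φ]
  have hlen : ((p.map φ).copy hu hv).length = G.dist u v := by simpa using hp
  refine ⟨(p.map φ).copy hu hv, Walk.isPath_of_length_eq_dist _ hlen, hlen, ?_⟩
  simp only [Walk.support_copy, Walk.support_map, List.mem_map]
  rintro _ ⟨y, -, rfl⟩ hyS
  by_cases hy : y ∈ S ∧ y ≠ u ∧ y ≠ v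
  · simp only [φ, RelHom.coeFn_mk, if_pos hy] at hyS
    exact absurd hyS (htS y hy.1)
  · simp only [φ, RelHom.coeFn_mk, if_neg hy] at hyS ⊢
    tauto

end General

section Adjacency

variable {r n t : ℕ}

theorem gluedAdj_ne {a b : gluedVert r n t} (h : gluedAdj r n t a b) : a ≠ b := by
  rintro rfl
  match a, h with
  | .inl (_, s), ⟨_, _, hs⟩ => simpa using congrArg List.length hs

theorem gluedTree_adj {a b : gluedVert r n t} :
    (gluedTree r n t).Adj a b ↔ gluedAdj r n t a b ∨ gluedAdj r n t b a := by
  rw [gluedTree, fromRel_adj, and_iff_right_iff_imp]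
  rintro (h | h)
  exacts [gluedAdj_ne h, (gluedAdj_ne h).symm]

theorem gluedTree_adj_inl_inl {i j : Fin n} {s s' : {l : List (Fin t) // l.length < r}} :
    (gluedTree r n t).Adj (.inl (i, s)) (.inl (j, s')) ↔
      i = j ∧ ((∃ b, s'.val = s.val ++ [b]) ∨ ∃ b, s.val = s'.val ++ [b]) := by
  simp only [gluedTree_adj, gluedAdj]
  grind

theorem gluedTree_adj_inl_inr {i : Fin n} {s : {l : List (Fin t) // l.length < r}}
    {l : {l : List (Fin t) // l.length = r}} :
    (gluedTree r n t).Adj (.inl (i, s)) (.inr l) ↔ ∃ b, l.val = s.val ++ [b] := by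
  simp [gluedTree_adj, gluedAdj]

theorem gluedTree_not_adj_inr_inr {l m : {l : List (Fin t) // l.length = r}} :
    ¬(gluedTree r n t).Adj (.inr l) (.inr m) := by
  simp [gluedTree_adj, gluedAdj]

theorem isIndepSet_quasiLeaves : (gluedTree r n t).IsIndepSet (quasiLeaves r n t) := by
  rintro _ ⟨l, rfl⟩ _ ⟨m, rfl⟩ -
  exact gluedTree_not_adj_inr_inr

end Adjacency

namespace GluedBinaryTree

variable {k : ℕ} {S : Set (gluedVert (k + 1) 2 2)}

def leaf (p : List.Vector (Fin 2) k) (c : Fin 2) : gluedVert (k + 1) 2 2 :=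
  .inr ⟨p.1 ++ [c], by simp [p.2]⟩

def leafParent (i : Fin 2) (p : List.Vector (Fin 2) k) : gluedVert (k + 1) 2 2 :=
  .inl (i, ⟨p.1, by simp [p.2]⟩)

theorem leaf_inj {p q : List.Vector (Fin 2) k} {c d : Fin 2} :
    leaf p c = leaf q d ↔ p = q ∧ c = d := by
  simp [leaf, ← List.Vector.toList_injective.eq_iff (a := p), List.Vector.toList]

theorem leafParent_inj {i j : Fin 2} {p q : List.Vector (Fin 2) k} :
    leafParent i p = leafParent j q ↔ i = j ∧ p = q := by
  simp [leafParent, ← List.Vector.toList_injective.eq_iff (a := p), List.Vector.toList]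

theorem mem_quasiLeaves_iff {x : gluedVert (k + 1) 2 2} :
    x ∈ quasiLeaves (k + 1) 2 2 ↔ ∃ p c, x = leaf p c := by
  refine ⟨?_, fun ⟨p, c, hx⟩ => ⟨_, hx⟩⟩
  rintro ⟨⟨l, hl⟩, rfl⟩
  obtain ⟨p, c, rfl⟩ := (List.eq_nil_or_concat l).resolve_left (by rintro rfl; simp at hl)
  exact ⟨⟨p, by simpa using hl⟩, c, by simp [leaf]⟩

theorem adj_leaf_iff {x : gluedVert (k + 1) 2 2} {p : List.Vector (Fin 2) k} {c : Fin 2} :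
    (gluedTree (k + 1) 2 2).Adj x (leaf p c) ↔ ∃ i, x = leafParent i p := by
  rcases x with ⟨i, s⟩ | l
  · simp [leaf, leafParent, gluedTree_adj_inl_inr, Subtype.ext_iff, eq_comm]
  · simp [leaf, leafParent, gluedTree_not_adj_inr_inr]

theorem neighborSet_leaf (p : List.Vector (Fin 2) k) (c : Fin 2) :
    (gluedTree (k + 1) 2 2).neighborSet (leaf p c) = Set.range (leafParent · p) := by
  ext x
  rw [mem_neighborSet, adj_comm, adj_leaf_iff]
  exact exists_congr fun _ => eq_comm

theorem neighborSet_leaf_eq_iff {p q : List.Vector (Fin 2) k} {c d : Fin 2} :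
    (gluedTree (k + 1) 2 2).neighborSet (leaf p c) =
      (gluedTree (k + 1) 2 2).neighborSet (leaf q d) ↔ p = q := by
  refine ⟨fun h => ?_, by rintro rfl; simp only [neighborSet_leaf]⟩
  obtain ⟨i, hi⟩ : leafParent 0 p ∈ Set.range (leafParent · q) := by
    rw [← neighborSet_leaf q d, ← h, neighborSet_leaf]
    exact ⟨0, rfl⟩
  exact (leafParent_inj.mp hi).2.symm

theorem reachable_root (i : Fin 2) (s : List (Fin 2)) (hs : s.length < k + 1) :
    (gluedTree (k + 1) 2 2).Reachable (.inl (i, ⟨s, hs⟩)) (.inl (i, ⟨[], by simp⟩)) := by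
  induction s using List.reverseRecOn with
  | nil => rfl
  | append_singleton s b ih =>
    have hs' : s.length < k + 1 := by simp at hs; omega
    have hadj :
        (gluedTree (k + 1) 2 2).Adj (.inl (i, ⟨s, hs'⟩)) (.inl (i, ⟨s ++ [b], hs⟩)) :=
      gluedTree_adj_inl_inl.mpr ⟨rfl, .inl ⟨b, rfl⟩⟩
    exact hadj.reachable.symm.trans (ih hs')

theorem gluedTree_preconnected : (gluedTree (k + 1) 2 2).Preconnected := by
  have hroot : ∀ i, (gluedTree (k + 1) 2 2).Reachable (.inl (i, ⟨[], by simp⟩))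
      (.inl (0, ⟨[], by simp⟩)) := by
    intro i
    let p : List.Vector (Fin 2) k := List.Vector.replicate k 0
    have hleaf : ∀ j, (gluedTree (k + 1) 2 2).Adj (leafParent j p) (leaf p 0) :=
      fun j => adj_leaf_iff.mpr ⟨j, rfl⟩
    exact (reachable_root i p.1 _).symm.trans <|
      (hleaf i).reachable.trans <| (hleaf 0).reachable.symm.trans (reachable_root 0 p.1 _)
  suffices h : ∀ x, (gluedTree (k + 1) 2 2).Reachable x (.inl (0, ⟨[], by simp⟩)) from
    fun x y => (h x).trans (h y).symm
  rintro (⟨i, s, hs⟩ | l)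
  · exact (reachable_root i s hs).trans (hroot i)
  · obtain ⟨p, c, hl⟩ := mem_quasiLeaves_iff.mp ⟨l, rfl⟩
    rw [hl]
    exact (adj_leaf_iff.mpr ⟨0, rfl⟩).reachable.symm.trans <|
      (reachable_root 0 p.1 _).trans (hroot 0)

def leafSection (f : List.Vector (Fin 2) k → Fin 2) : Set (gluedVert (k + 1) 2 2) :=
  Set.range fun p => leaf p (f p)

theorem leaf_mem_leafSection {f : List.Vector (Fin 2) k → Fin 2} {p : List.Vector (Fin 2) k}
    {c : Fin 2} : leaf p c ∈ leafSection f ↔ f p = c := by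
  simp only [leafSection, Set.mem_range, leaf_inj]
  exact ⟨fun ⟨_, rfl, h⟩ => h, fun h => ⟨p, rfl, h⟩⟩

theorem leafSection_subset_quasiLeaves (f : List.Vector (Fin 2) k → Fin 2) :
    leafSection f ⊆ quasiLeaves (k + 1) 2 2 := by
  rintro _ ⟨p, rfl⟩
  exact mem_quasiLeaves_iff.mpr ⟨p, f p, rfl⟩

theorem leafSection_injective : Function.Injective (leafSection (k := k)) := by
  intro f g h
  funext p
  have hp : leaf p (f p) ∈ leafSection g := h ▸ ⟨p, rfl⟩
  exact (leaf_mem_leafSection.mp hp).symm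

theorem ncard_leafSection (f : List.Vector (Fin 2) k → Fin 2) :
    (leafSection f).ncard = 2 ^ k := by
  rw [leafSection, Set.ncard_range_of_injective fun p q h => (leaf_inj.mp h).1,
    Nat.card_eq_fintype_card, card_vector, Fintype.card_fin]

theorem isTotalMVSet_leafSection (f : List.Vector (Fin 2) k → Fin 2) :
    isTotalMVSet (gluedTree (k + 1) 2 2) (leafSection f) := by
  refine isTotalMVSet_of_isIndepSet gluedTree_preconnected
    (isIndepSet_quasiLeaves.mono (leafSection_subset_quasiLeaves f)) ?_
  rintro _ ⟨p, rfl⟩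
  exact ⟨leaf p (f p + 1), leaf_mem_leafSection.not.mpr (by omega),
    (neighborSet_leaf_eq_iff.mpr rfl).le⟩

theorem leaf_eq_of_mem_of_isTotalMVSet (hS : isTotalMVSet (gluedTree (k + 1) 2 2) S)
    {p : List.Vector (Fin 2) k} {c d : Fin 2} (hc : leaf p c ∈ S) (hd : leaf p d ∈ S) :
    c = d := by
  by_contra hcd
  have hall : ∀ e, leaf p e ∈ S := by
    intro e
    obtain rfl | rfl : e = c ∨ e = d := by omega
    exacts [hc, hd]
  obtain ⟨w, hw₀, hw₁, hwS⟩ := hS.exists_adj_adj_not_mem (z := leaf p c)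
    (mt leafParent_inj.mp (by simp)) (by simp [leafParent, gluedTree_adj_inl_inl])
    (adj_leaf_iff.mpr ⟨0, rfl⟩) ((adj_leaf_iff.mpr ⟨1, rfl⟩).symm)
  rcases w with ⟨j, s⟩ | l
  · have h₀ := (gluedTree_adj_inl_inl.mp hw₀).1
    have h₁ := (gluedTree_adj_inl_inl.mp hw₁).1
    exact absurd (h₀.trans h₁) (by decide)
  · obtain ⟨q, e, hl⟩ := mem_quasiLeaves_iff.mp ⟨l, rfl⟩
    rw [hl] at hw₀ hwS
    obtain ⟨i, hi⟩ := adj_leaf_iff.mp hw₀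
    obtain rfl := (leafParent_inj.mp hi).2
    exact hwS (hall e)

/-- An internal vertex is the only common neighbour of its two children, or, at depth `k`, of
its parent and a leaf child. -/
theorem inl_not_mem_of_isTotalMVSet (hk : 1 ≤ k) (hS : isTotalMVSet (gluedTree (k + 1) 2 2) S)
    (i : Fin 2) (s : {l : List (Fin 2) // l.length < k + 1}) : .inl (i, s) ∉ S := by
  obtain ⟨s, hs⟩ := s
  rcases (Nat.lt_succ_iff_lt_or_eq.mp hs) with hlt | heq
  · have h₀ : (s ++ [0]).length < k + 1 := by simpa
    have h₁ : (s ++ [1]).length < k + 1 := by simpa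
    refine hS.not_mem_of_forall_adj_adj_eq (u := .inl (i, ⟨_, h₀⟩))
      (v := .inl (i, ⟨_, h₁⟩)) (by simp) (by simp [gluedTree_adj_inl_inl])
      (gluedTree_adj_inl_inl.mpr ⟨rfl, .inr ⟨0, rfl⟩⟩)
      (gluedTree_adj_inl_inl.mpr ⟨rfl, .inl ⟨1, rfl⟩⟩) ?_
    rintro (⟨j, t, ht⟩ | l) hu hv
    · obtain ⟨rfl, ⟨b, h₀⟩ | ⟨b, h₀⟩⟩ := gluedTree_adj_inl_inl.mp hu <;>
        obtain ⟨-, ⟨b', h₁⟩ | ⟨b', h₁⟩⟩ := gluedTree_adj_inl_inl.mp hv <;>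
        dsimp only at h₀ h₁
      · simpa [h₀] using congrArg List.length h₁
      · simp [h₀] at h₁
      · simp_all
      · simpa [h₁] using congrArg List.length h₀
    · obtain ⟨b, hb⟩ := gluedTree_adj_inl_inr.mp hu
      obtain ⟨b', hb'⟩ := gluedTree_adj_inl_inr.mp hv.symm
      simp [hb] at hb'
  · have hne : s ≠ [] := by rintro rfl; simp at heq; omega
    have hpar : s.dropLast.length < k + 1 := by simp; omega
    let p : List.Vector (Fin 2) k := ⟨s, heq⟩
    refine hS.not_mem_of_forall_adj_adj_eq (u := .inl (i, ⟨_, hpar⟩)) (v := leaf p 0)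
      (by simp [leaf]) (fun h => ?_)
      (gluedTree_adj_inl_inl.mpr ⟨rfl, .inl ⟨_, (List.dropLast_append_getLast hne).symm⟩⟩)
      (adj_leaf_iff.mpr ⟨i, rfl⟩) fun w hu hv => ?_
    · obtain ⟨j, hj⟩ := adj_leaf_iff.mp h
      simp only [leafParent, p, Sum.inl.injEq, Prod.mk.injEq, Subtype.mk.injEq] at hj
      have := congrArg List.length hj.2
      simp at this
      omega
    · obtain ⟨j, rfl⟩ := adj_leaf_iff.mp hv
      obtain ⟨rfl, -⟩ := gluedTree_adj_inl_inl.mp hu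
      rfl

theorem subset_quasiLeaves_of_isTotalMVSet (hk : 1 ≤ k)
    (hS : isTotalMVSet (gluedTree (k + 1) 2 2) S) : S ⊆ quasiLeaves (k + 1) 2 2 := by
  rintro (⟨i, s⟩ | l) hx
  exacts [absurd hx (inl_not_mem_of_isTotalMVSet hk hS i s), ⟨l, rfl⟩]

theorem exists_subset_leafSection_of_isTotalMVSet (hk : 1 ≤ k)
    (hS : isTotalMVSet (gluedTree (k + 1) 2 2) S) : ∃ f, S ⊆ leafSection f := by
  classical
  refine ⟨fun p => if leaf p 1 ∈ S then 1 else 0, fun x hx => ?_⟩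
  obtain ⟨p, c, rfl⟩ := mem_quasiLeaves_iff.mp (subset_quasiLeaves_of_isTotalMVSet hk hS hx)
  rw [leaf_mem_leafSection]
  split_ifs with h
  · exact leaf_eq_of_mem_of_isTotalMVSet hS h hx
  · obtain rfl | rfl : c = 0 ∨ c = 1 := by omega
    exacts [rfl, absurd hx h]
theorem isMaximumTotalMVSet_iff (hk : 1 ≤ k) :
    (isTotalMVSet (gluedTree (k + 1) 2 2) S ∧
      ∀ T, isTotalMVSet (gluedTree (k + 1) 2 2) T → T.ncard ≤ S.ncard) ↔
      ∃ f, S = leafSection f := by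
  constructor
  · rintro ⟨hS, hmax⟩
    obtain ⟨f, hf⟩ := exists_subset_leafSection_of_isTotalMVSet hk hS
    exact ⟨f, Set.eq_of_subset_of_ncard_le hf (hmax _ (isTotalMVSet_leafSection f))
      (Set.finite_range _)⟩
  · rintro ⟨f, rfl⟩
    refine ⟨isTotalMVSet_leafSection f, fun T hT => ?_⟩
    obtain ⟨g, hg⟩ := exists_subset_leafSection_of_isTotalMVSet hk hT
    calc T.ncard ≤ (leafSection g).ncard := Set.ncard_le_ncard hg (Set.finite_range _)
      _ = (leafSection f).ncard := by rw [ncard_leafSection, ncard_leafSection]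

theorem twinTransversal_iff_exists_eq_leafSection :
    (S ⊆ quasiLeaves (k + 1) 2 2 ∧
      ∀ u ∈ quasiLeaves (k + 1) 2 2, ∀ v ∈ quasiLeaves (k + 1) 2 2, u ≠ v →
        (gluedTree (k + 1) 2 2).neighborSet u = (gluedTree (k + 1) 2 2).neighborSet v →
        (u ∈ S ↔ v ∉ S)) ↔
      ∃ f, S = leafSection f := by
  classical
  constructor
  · rintro ⟨hQ, htwin⟩
    refine ⟨fun p => if leaf p 1 ∈ S then 1 else 0, Set.ext fun x => ?_⟩
    by_cases hx : x ∈ quasiLeaves (k + 1) 2 2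
    · obtain ⟨p, c, rfl⟩ := mem_quasiLeaves_iff.mp hx
      have h01 := htwin (leaf p 0) (mem_quasiLeaves_iff.mpr ⟨p, 0, rfl⟩) (leaf p 1)
        (mem_quasiLeaves_iff.mpr ⟨p, 1, rfl⟩) (by simp [leaf_inj])
        (neighborSet_leaf_eq_iff.mpr rfl)
      rw [leaf_mem_leafSection]
      obtain rfl | rfl : c = 0 ∨ c = 1 := by omega
      all_goals split_ifs <;> simp_all
    · exact iff_of_false (mt (hQ ·) hx) (mt (leafSection_subset_quasiLeaves _ ·) hx)
  · rintro ⟨f, rfl⟩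
    refine ⟨leafSection_subset_quasiLeaves f, fun u hu v hv huv hN => ?_⟩
    obtain ⟨p, c, rfl⟩ := mem_quasiLeaves_iff.mp hu
    obtain ⟨q, d, rfl⟩ := mem_quasiLeaves_iff.mp hv
    obtain rfl := neighborSet_leaf_eq_iff.mp hN
    have hcd : c ≠ d := fun h => huv (h ▸ rfl)
    rw [leaf_mem_leafSection, leaf_mem_leafSection]
    omega

end GluedBinaryTree

open GluedBinaryTree in
theorem stmt9 (r : ℕ) (hr : 2 ≤ r) :
    (∀ S : Set (gluedVert r 2 2),
      (isTotalMVSet (gluedTree r 2 2) S ∧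
        ∀ T : Set (gluedVert r 2 2), isTotalMVSet (gluedTree r 2 2) T →
          T.ncard ≤ S.ncard) ↔
      (S ⊆ quasiLeaves r 2 2 ∧
        ∀ u ∈ quasiLeaves r 2 2, ∀ v ∈ quasiLeaves r 2 2, u ≠ v →
          (gluedTree r 2 2).neighborSet u = (gluedTree r 2 2).neighborSet v →
          (u ∈ S ↔ v ∉ S))) ∧
    {S : Set (gluedVert r 2 2) | isTotalMVSet (gluedTree r 2 2) S ∧
        ∀ T : Set (gluedVert r 2 2), isTotalMVSet (gluedTree r 2 2) T →
          T.ncard ≤ S.ncard}.ncard = 2 ^ 2 ^ (r - 1) := by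
  obtain ⟨k, rfl⟩ : ∃ k, r = k + 1 := ⟨r - 1, by omega⟩
  have hk : 1 ≤ k := by omega
  refine ⟨fun S => (isMaximumTotalMVSet_iff hk).trans
    twinTransversal_iff_exists_eq_leafSection.symm, ?_⟩
  have hrange : {S | isTotalMVSet (gluedTree (k + 1) 2 2) S ∧
      ∀ T, isTotalMVSet (gluedTree (k + 1) 2 2) T → T.ncard ≤ S.ncard} =
      Set.range leafSection := by
    ext S
    simp only [Set.mem_ofPred_eq, isMaximumTotalMVSet_iff hk, Set.mem_range, eq_comm]
  rw [hrange, Set.ncard_range_of_injective leafSection_injective]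
  simp [Nat.card_eq_fintype_card]
end
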